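/- arXiv:1806.02399 — 8 statements merged into one kernel-verified Lean document; each statement's English description precedes it below -/
import Mathlib

section
/- For any tree T, the rank of the adjacency matrix of T equals twice the matching number of T. -/
/-
An acyclic graph with an edge has a vertex `v` whose only neighbour is some `u`. Deleting all edges
at `u` lowers the matching number by exactly one: at most one edge of a matching meets `u`, and
`s(u, v)` can be added to any matching avoiding `u`. It lowers the rank of the adjacency matrix `A`
by exactly two: row `v` of `A` is the unit vector `e_u`, so subtracting multiples of it from the
other rows clears column `u`; the rows of `A` are then spanned by the rows of the smaller adjacency
matrix together with `e_u` and row `u`, and these two are independent of the rest because of their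
entries in columns `u` and `v`. Induction on the graph gives `rank A = 2 ν` for every forest.
-/

open SimpleGraph Finset

def IsMatchingF {V : Type*} (G : SimpleGraph V) (M : Finset (Sym2 V)) : Prop :=
  (∀ e ∈ M, e ∈ G.edgeSet) ∧
  ∀ e ∈ M, ∀ f ∈ M, e ≠ f → ∀ v : V, ¬(v ∈ e ∧ v ∈ f)

noncomputable def matchNum {V : Type*} (G : SimpleGraph V) : ℕ :=
  sSup {k | ∃ M : Finset (Sym2 V), IsMatchingF G M ∧ M.card = k}

open Submodule Module

lemma Submodule.finrank_sup_span_pair_eq_finrank_add_two {n K : Type*} [Finite n] [Field K]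
    {W : Submodule K (n → K)} {u v : n}
    (hW : W ≤ LinearMap.ker (LinearMap.proj u) ⊓ LinearMap.ker (LinearMap.proj v))
    {p q : n → K} (hpu : p u = 1) (hpv : p v = 0) (hqv : q v = 1) :
    finrank K ↥(W ⊔ span K {p, q}) = finrank K W + 2 := by
  have hvanish : ∀ a b : K, (a • p + b • q) u = 0 → (a • p + b • q) v = 0 → a = 0 ∧ b = 0 := by
    intro a b hu hv
    simp only [Pi.add_apply, Pi.smul_apply, smul_eq_mul, hpu, hpv, hqv] at hu hv
    have hb : b = 0 := by simpa using hv
    exact ⟨by simpa [hb] using hu, hb⟩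
  have hinf : W ⊓ span K {p, q} = ⊥ := by
    refine eq_bot_iff.mpr fun f ⟨hfW, hf⟩ => ?_
    obtain ⟨a, b, rfl⟩ := mem_span_pair.mp hf
    have := hW hfW
    simp only [mem_inf, LinearMap.mem_ker, LinearMap.coe_proj, Function.eval] at this
    obtain ⟨rfl, rfl⟩ := hvanish a b this.1 this.2
    simp
  have hli : LinearIndependent K ![p, q] :=
    LinearIndependent.pair_iff.mpr fun a b hab =>
      hvanish a b (congrFun hab u) (congrFun hab v)
  have hpair : finrank K ↥(span K {p, q}) = 2 := by
    rw [← Matrix.range_cons_cons_empty, finrank_span_eq_card hli, Fintype.card_fin]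
  have := finrank_sup_add_finrank_inf_eq W (span K {p, q})
  rw [hinf, finrank_bot, hpair] at this
  omega

namespace Matrix

variable {n K : Type*} [Fintype n] [DecidableEq n] [Field K]

lemma rank_eq_rank_add_two_of_row_eq_single_of_col_eq_single {A B : Matrix n n K} {u v : n}
    (huv : u ≠ v) (hrow : A v = Pi.single u 1) (hcol : Aᵀ v = Pi.single u 1)
    (hB : ∀ x y, B x y = if x = u ∨ x = v ∨ y = u ∨ y = v then 0 else A x y) :
    A.rank = B.rank + 2 := by
  have hBrow : ∀ w, w = u ∨ w = v → B w = 0 := by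
    rintro w (rfl | rfl) <;> ext <;> simp [hB]
  have hArow : ∀ w, w ≠ u → w ≠ v → A w = B w + A w u • A v := by
    intro w hwu hwv
    have hwv' : A w v = 0 := by simpa [hwu] using congrFun hcol w
    funext x
    by_cases hxu : x = u
    · subst hxu; simp [hB, hrow]
    · by_cases hxv : x = v
      · subst hxv; simp [hB, hrow, hwv', huv]
      · simp [hB, hrow, hxu, hxv, hwu, hwv]
  have hspan : span K (Set.range A.row) = span K (Set.range B.row) ⊔ span K {A v, A u} := by
    apply le_antisymm
    · rw [span_le]
      rintro _ ⟨w, rfl⟩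
      by_cases hw : w = u ∨ w = v
      · exact mem_sup_right (subset_span (by rcases hw with rfl | rfl <;> simp [row_apply']))
      · obtain ⟨hwu, hwv⟩ := not_or.mp hw
        rw [row_apply', hArow w hwu hwv]
        exact add_mem (mem_sup_left (subset_span ⟨w, rfl⟩))
          (smul_mem _ _ (mem_sup_right (subset_span (by simp))))
    · refine sup_le (span_le.mpr ?_) (span_le.mpr ?_)
      · rintro _ ⟨w, rfl⟩
        by_cases hw : w = u ∨ w = v
        · simp [row_apply', hBrow w hw]
        · obtain ⟨hwu, hwv⟩ := not_or.mp hw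
          rw [row_apply', eq_sub_of_add_eq (hArow w hwu hwv).symm]
          exact sub_mem (subset_span ⟨w, rfl⟩) (smul_mem _ _ (subset_span ⟨v, rfl⟩))
      · rintro _ (rfl | rfl)
        exacts [subset_span ⟨v, rfl⟩, subset_span ⟨u, rfl⟩]
  have hBker : span K (Set.range B.row) ≤
      LinearMap.ker (LinearMap.proj u) ⊓ LinearMap.ker (LinearMap.proj v) := by
    rw [span_le]
    rintro _ ⟨w, rfl⟩
    simp [hB]
  rw [rank_eq_finrank_span_row, rank_eq_finrank_span_row, hspan]
  exact finrank_sup_span_pair_eq_finrank_add_two hBker (by simp [hrow]) (by simp [hrow, huv])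
    (by simpa using congrFun hcol u)

end Matrix

namespace SimpleGraph

variable {V : Type*} {G : SimpleGraph V}

lemma isMatchingF_empty : IsMatchingF G ∅ := by
  simp [IsMatchingF]

lemma IsMatchingF.subset {M N : Finset (Sym2 V)} (hN : IsMatchingF G N) (hMN : M ⊆ N) :
    IsMatchingF G M :=
  ⟨fun e he => hN.1 e (hMN he), fun e he f hf => hN.2 e (hMN he) f (hMN hf)⟩

lemma IsMatchingF.insert [DecidableEq V] {M : Finset (Sym2 V)} {e : Sym2 V}
    (hM : IsMatchingF G M) (he : e ∈ G.edgeSet) (hdisj : ∀ f ∈ M, ∀ w ∈ e, w ∉ f) : IsMatchingF G (insert e M) := by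
  refine ⟨fun f hf => ?_, fun f hf g hg hfg w ⟨hwf, hwg⟩ => ?_⟩
  · rcases Finset.mem_insert.mp hf with rfl | hf
    exacts [he, hM.1 f hf]
  · rcases Finset.mem_insert.mp hf with hf | hf <;> rcases Finset.mem_insert.mp hg with hg | hg
    · exact hfg (hf.trans hg.symm)
    · exact hdisj g hg w (hf ▸ hwf) hwg
    · exact hdisj f hf w (hg ▸ hwg) hwf
    · exact hM.2 f hf g hg hfg w ⟨hwf, hwg⟩

lemma IsMatchingF.card_filter_mem_le_one [DecidableEq V] {M : Finset (Sym2 V)}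
    (hM : IsMatchingF G M) (u : V) : (M.filter (u ∈ ·)).card ≤ 1 :=
  Finset.card_le_one.mpr fun e he f hf => by
    rw [Finset.mem_filter] at he hf
    by_contra hef
    exact hM.2 e he.1 f hf.1 hef u ⟨he.2, hf.2⟩

lemma isMatchingF_deleteIncidenceSet_iff {M : Finset (Sym2 V)} {u : V} :
    IsMatchingF (G.deleteIncidenceSet u) M ↔ IsMatchingF G M ∧ ∀ e ∈ M, u ∉ e := by
  simp only [IsMatchingF, edgeSet_deleteIncidenceSet, incidenceSet, Set.mem_sdiff,
    Set.mem_ofPred_eq]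
  grind

section Finite

variable [Finite V]

lemma bddAbove_card_isMatchingF :
    BddAbove {k | ∃ M : Finset (Sym2 V), IsMatchingF G M ∧ M.card = k} := by
  refine ((Set.finite_range (Finset.card : Finset (Sym2 V) → ℕ)).subset ?_).bddAbove
  rintro _ ⟨M, -, rfl⟩
  exact ⟨M, rfl⟩

lemma exists_isMatchingF_card_eq_matchNum (G : SimpleGraph V) :
    ∃ M : Finset (Sym2 V), IsMatchingF G M ∧ M.card = matchNum G :=
  Nat.sSup_mem ⟨0, by exact ⟨∅, isMatchingF_empty, rfl⟩⟩ bddAbove_card_isMatchingF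

lemma IsMatchingF.card_le_matchNum {M : Finset (Sym2 V)} (hM : IsMatchingF G M) :
    M.card ≤ matchNum G :=
  le_csSup bddAbove_card_isMatchingF ⟨M, hM, rfl⟩

lemma matchNum_bot : matchNum (⊥ : SimpleGraph V) = 0 := by
  obtain ⟨M, hM, hcard⟩ := exists_isMatchingF_card_eq_matchNum (⊥ : SimpleGraph V)
  rw [← hcard, Finset.card_eq_zero, Finset.eq_empty_iff_forall_notMem]
  simpa using hM.1

lemma matchNum_le_matchNum_deleteIncidenceSet_add_one (G : SimpleGraph V) (u : V) :
    matchNum G ≤ matchNum (G.deleteIncidenceSet u) + 1 := by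
  classical
  obtain ⟨M, hM, hcard⟩ := exists_isMatchingF_card_eq_matchNum G
  have hM' : IsMatchingF (G.deleteIncidenceSet u) (M.filter (u ∉ ·)) :=
    isMatchingF_deleteIncidenceSet_iff.mpr
      ⟨hM.subset (Finset.filter_subset _ _), fun e he => (Finset.mem_filter.mp he).2⟩
  have := Finset.card_filter_add_card_filter_not (s := M) (u ∉ ·)
  simp only [not_not] at this
  have := hM'.card_le_matchNum
  have := hM.card_filter_mem_le_one u
  omega

lemma matchNum_deleteIncidenceSet_add_one_le {u v : V} (huv : G.Adj u v)
    (hv : ∀ w, G.Adj v w → w = u) : matchNum (G.deleteIncidenceSet u) + 1 ≤ matchNum G := by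
  classical
  obtain ⟨M, hM, hcard⟩ := exists_isMatchingF_card_eq_matchNum (G.deleteIncidenceSet u)
  obtain ⟨hMG, hu⟩ := isMatchingF_deleteIncidenceSet_iff.mp hM
  have hnotMem : s(u, v) ∉ M := fun h => hu _ h (Sym2.mem_mk_left u v)
  have hv' : ∀ f ∈ M, v ∉ f := by
    intro f hf hvf
    have hf' := hMG.1 f hf
    rw [← Sym2.other_spec hvf, mem_edgeSet] at hf'
    exact hu f hf (hv _ hf' ▸ Sym2.other_mem hvf)
  have := (hMG.insert huv fun f hf w hw => by
    rcases Sym2.mem_iff.mp hw with rfl | rfl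
    exacts [hu f hf, hv' f hf]).card_le_matchNum
  rwa [Finset.card_insert_of_notMem hnotMem, hcard] at this

lemma matchNum_eq_matchNum_deleteIncidenceSet_add_one {u v : V} (huv : G.Adj u v)
    (hv : ∀ w, G.Adj v w → w = u) : matchNum G = matchNum (G.deleteIncidenceSet u) + 1 :=
  (matchNum_le_matchNum_deleteIncidenceSet_add_one G u).antisymm
    (matchNum_deleteIncidenceSet_add_one_le huv hv)

lemma IsAcyclic.exists_adj_forall_adj_eq (hG : G.IsAcyclic) {a b : V}
    (hab : G.Adj a b) : ∃ u v, G.Adj u v ∧ ∀ w, G.Adj v w → w = u := by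
  have : Nonempty V := ⟨a⟩
  -- the first vertex of a longest path is a leaf
  obtain ⟨x, y, p, hp, hmax⟩ := Walk.exists_isPath_forall_isPath_length_le_length G
  have hnil : ¬p.Nil := Walk.not_nil_iff_lt_length.mpr <|
    hmax a b (.cons hab .nil) (by simp [hab.ne])
  refine ⟨p.snd, x, (p.adj_snd hnil).symm, fun w hxw => ?_⟩
  by_cases hw : w ∈ p.support
  · exact hG.eq_snd_of_adj_start hp hxw hw
  · have := hmax w y (.cons hxw.symm p) (hp.cons hw)
    simp at this

end Finite

variable [Fintype V] (K : Type*) [Field K]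

lemma rank_adjMatrix_eq_rank_adjMatrix_deleteIncidenceSet_add_two [DecidableEq V]
    [DecidableRel G.Adj] {u v : V} (huv : G.Adj u v) (hv : ∀ w, G.Adj v w → w = u) :
    (G.adjMatrix K).rank = ((G.deleteIncidenceSet u).adjMatrix K).rank + 2 := by
  have hv' : ∀ w, G.Adj v w ↔ w = u := fun w => ⟨hv w, fun h => h ▸ huv.symm⟩
  refine Matrix.rank_eq_rank_add_two_of_row_eq_single_of_col_eq_single huv.ne ?_ ?_ ?_
  · ext w
    simp [adjMatrix_apply, hv', Pi.single_apply]
  · ext w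
    simp [adjMatrix_apply, G.adj_comm w v, hv', Pi.single_apply]
  · intro x y
    have := hv' x
    have := hv' y
    simp only [adjMatrix_apply, deleteIncidenceSet_adj]
    split_ifs <;> grind [adj_comm]

theorem IsAcyclic.rank_adjMatrix_eq_two_mul_matchNum [DecidableRel G.Adj] (hG : G.IsAcyclic) :
    (G.adjMatrix K).rank = 2 * matchNum G := by
  classical
  revert ‹DecidableRel G.Adj› hG
  induction G using WellFoundedLT.induction with
  | ind G ih =>
    intro _ hG
    rcases eq_or_ne G ⊥ with rfl | hne
    · have : adjMatrix K (⊥ : SimpleGraph V) = 0 := by ext; simp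
      simp [this, matchNum_bot]
    obtain ⟨a, b, hab⟩ := ne_bot_iff_exists_adj.mp hne
    obtain ⟨u, v, huv, hv⟩ := hG.exists_adj_forall_adj_eq hab
    have hlt : G.deleteIncidenceSet u < G :=
      lt_of_le_not_ge (G.deleteIncidenceSet_le u) fun h =>
        (deleteIncidenceSet_adj.mp (h huv)).2.1 rfl
    have hrank := ih _ hlt (hG.anti (G.deleteIncidenceSet_le u))
    rw [rank_adjMatrix_eq_rank_adjMatrix_deleteIncidenceSet_add_two K huv hv, hrank,
      matchNum_eq_matchNum_deleteIncidenceSet_add_one huv hv]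
    ring

end SimpleGraph

theorem tree_rank_eq_two_mul_matchNum_general {V : Type*} [Fintype V]
    (G : SimpleGraph V) [DecidableRel G.Adj] (hT : G.IsTree) :
    (G.adjMatrix ℚ).rank = 2 * matchNum G :=
  hT.isAcyclic.rank_adjMatrix_eq_two_mul_matchNum ℚ

theorem tree_rank_eq_two_mul_matchNum {V : Type*} [Fintype V] [DecidableEq V]
    (G : SimpleGraph V) [DecidableRel G.Adj] (hT : G.IsTree) :
    (G.adjMatrix ℚ).rank = 2 * matchNum G :=
  tree_rank_eq_two_mul_matchNum_general G hT
end

section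
/- The rank of the adjacency matrix of any tree is even. -/
/-!
A tree is bipartite. Listing the vertices of one colour class first, its adjacency matrix becomes
`fromBlocks 0 B Bᵀ 0`, whose rank is `rank B + rank Bᵀ = 2 * rank B`.
-/

open Module

theorem Submodule.finrank_prod {K M N : Type*} [DivisionRing K] [AddCommGroup M] [Module K M]
    [AddCommGroup N] [Module K N] (p : Submodule K M) (q : Submodule K N)
    [FiniteDimensional K p] [FiniteDimensional K q] :
    finrank K (p.prod q) = finrank K p + finrank K q := by
  have hpq : p.prod q = LinearMap.range (p.subtype.prodMap q.subtype) := by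
    rw [LinearMap.range_prodMap, p.range_subtype, q.range_subtype]
  rw [hpq, LinearMap.finrank_range_of_inj (p.injective_subtype.prodMap q.injective_subtype),
    Module.finrank_prod]

namespace Matrix

theorem rank_fromBlocks_zero₁₁_zero₂₂ {K m n : Type*} [Field K] [Fintype m] [Fintype n]
    (B : Matrix m n K) (C : Matrix n m K) :
    (fromBlocks 0 B C 0).rank = B.rank + C.rank := by
  let e := LinearEquiv.sumArrowLequivProdArrow m n K K
  have hmulVec : (fromBlocks 0 B C 0).mulVecLin = e.symm.toLinearMap ∘ₗ
      B.mulVecLin.prodMap C.mulVecLin ∘ₗ (e ≪≫ₗ LinearEquiv.prodComm K _ _).toLinearMap := by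
    ext v (i | i) <;> simp only [mulVecBilin_apply, fromBlocks_mulVec, zero_mulVec, zero_add,
      add_zero, Sum.elim_inl, Sum.elim_inr, LinearMap.coe_comp, LinearEquiv.coe_coe,
      Function.comp_apply, LinearEquiv.trans_apply, LinearEquiv.prodComm_apply,
      LinearMap.prodMap_apply, Prod.fst_swap, Prod.snd_swap,
      LinearEquiv.sumArrowLequivProdArrow_symm_apply_inl,
      LinearEquiv.sumArrowLequivProdArrow_symm_apply_inr, e] <;> rfl
  rw [rank, hmulVec, LinearMap.range_comp,
    LinearMap.range_comp_of_range_eq_top _ (LinearEquiv.range _), LinearEquiv.finrank_map_eq,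
    LinearMap.range_prodMap, Submodule.finrank_prod, rank, rank]

end Matrix

namespace SimpleGraph

theorem IsBipartite.even_rank_adjMatrix {V K : Type*} [Fintype V] [Field K] {G : SimpleGraph V}
    [DecidableRel G.Adj] (hG : G.IsBipartite) : Even (G.adjMatrix K).rank := by
  obtain ⟨c⟩ := hG
  let e := Equiv.sumCompl (c · = 0)
  let M := (G.adjMatrix K).submatrix e e
  have hdiag : M.toBlocks₁₁ = 0 ∧ M.toBlocks₂₂ = 0 := by
    constructor <;> ext i j <;> simp only [M, e, Matrix.toBlocks₁₁, Matrix.toBlocks₂₂,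
      Matrix.of_apply, Matrix.submatrix_apply, Equiv.sumCompl_apply_inl,
      Equiv.sumCompl_apply_inr, adjMatrix_apply, Matrix.zero_apply, ite_eq_right_iff,
      one_ne_zero, imp_false]
    · exact fun h ↦ c.valid h (i.2.trans j.2.symm)
    · exact fun h ↦ c.valid h (by omega)
  have hsymm : M.IsSymm := (isSymm_adjMatrix G).submatrix e
  rw [← M.fromBlocks_toBlocks, hdiag.1, hdiag.2, Matrix.isSymm_fromBlocks_iff] at hsymm
  have hblocks : M = Matrix.fromBlocks 0 M.toBlocks₁₂ M.toBlocks₁₂.transpose 0 := by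
    rw [hsymm.2.1, ← hdiag.1, ← hdiag.2, M.fromBlocks_toBlocks]
  have hrank : (G.adjMatrix K).rank = M.rank := (Matrix.rank_submatrix _ e e).symm
  rw [hrank, hblocks, Matrix.rank_fromBlocks_zero₁₁_zero₂₂, Matrix.rank_transpose]
  exact ⟨_, rfl⟩

end SimpleGraph

open SimpleGraph

theorem tree_rank_even_general {V : Type*} [Fintype V]
    (G : SimpleGraph V) [DecidableRel G.Adj] (hT : G.IsTree) :
    Even (G.adjMatrix ℚ).rank :=
  hT.isBipartite.even_rank_adjMatrix

theorem tree_rank_even {V : Type*} [Fintype V] [DecidableEq V]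
    (G : SimpleGraph V) [DecidableRel G.Adj] (hT : G.IsTree) :
    Even (G.adjMatrix ℚ).rank :=
  tree_rank_even_general G hT
end

section
/- Let T be a tree of order n > 2 with l leaves. If M is a matching in T, then |M| ≤ n - l. -/
open SimpleGraph Finset

/-! Every edge of a tree on more than two vertices has an endpoint that is not a leaf, and the
edges of a matching have pairwise distinct endpoints, so choosing a non-leaf endpoint of each
matching edge embeds the matching into the at most `n - l` non-leaves. -/

namespace SimpleGraph

variable {V : Type*} {G : SimpleGraph V}

lemma eq_of_adj_of_degree_eq_one {a b c : V} [Fintype (G.neighborSet a)]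
    (ha : G.degree a = 1) (hab : G.Adj a b) (hac : G.Adj a c) : c = b :=
  (degree_eq_one_iff_existsUnique_adj.mp ha).unique hac hab

lemma Preconnected.eq_or_eq_of_adj_of_degree_eq_one (hG : G.Preconnected) {a b : V}
    [Fintype (G.neighborSet a)] [Fintype (G.neighborSet b)] (hab : G.Adj a b)
    (ha : G.degree a = 1) (hb : G.degree b = 1) (c : V) : c = a ∨ c = b := by
  by_contra hc
  obtain ⟨p⟩ := hG a c
  obtain ⟨d, -, hd_fst, hd_snd⟩ := p.exists_boundary_dart {a, b} (by simp) hc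
  rcases hd_fst with h | h
  · exact hd_snd (Or.inr (eq_of_adj_of_degree_eq_one ha hab (h ▸ d.adj)))
  · exact hd_snd (Or.inl (eq_of_adj_of_degree_eq_one hb hab.symm (h ▸ d.adj)))

lemma Preconnected.exists_mem_degree_ne_one [Fintype V] [DecidableRel G.Adj]
    (hG : G.Preconnected) (hV : 2 < Fintype.card V) {e : Sym2 V} (he : e ∈ G.edgeSet) :
    ∃ v ∈ e, G.degree v ≠ 1 := by
  classical
  induction e with
  | _ a b =>
    by_contra! hleaf
    have hsub : (univ : Finset V) ⊆ {a, b} := fun c _ ↦ by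
      simpa using hG.eq_or_eq_of_adj_of_degree_eq_one he
        (hleaf a (Sym2.mem_mk_left a b)) (hleaf b (Sym2.mem_mk_right a b)) c
    have := (card_le_card hsub).trans card_le_two
    rw [card_univ] at this
    omega

end SimpleGraph

lemma IsMatchingF.card_le_of_forall_exists_mem {V : Type*} {G : SimpleGraph V}
    {M : Finset (Sym2 V)} (hM : IsMatchingF G M) {S : Finset V} (hS : ∀ e ∈ M, ∃ v ∈ S, v ∈ e) :
    M.card ≤ S.card :=
  card_le_card_of_forall_subsingleton (fun e v ↦ v ∈ e) hS fun v _ e ⟨he, hve⟩ f ⟨hf, hvf⟩ ↦ by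
    by_contra hef
    exact hM.2 e he f hf hef v ⟨hve, hvf⟩

theorem tree_matching_le_internal_general {V : Type*} [Fintype V]
    (G : SimpleGraph V) [DecidableRel G.Adj] (hT : G.IsTree)
    (hn : 2 < Fintype.card V)
    (M : Finset (Sym2 V)) (hM : IsMatchingF G M) :
    M.card ≤ Fintype.card V - (Finset.univ.filter fun v => G.degree v = 1).card := by
  have hM_le : M.card ≤ (univ.filter fun v ↦ ¬G.degree v = 1).card :=
    hM.card_le_of_forall_exists_mem fun e he ↦ by
      obtain ⟨v, hve, hv⟩ := hT.connected.preconnected.exists_mem_degree_ne_one hn (hM.1 e he)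
      exact ⟨v, by simpa using hv, hve⟩
  have hsplit := card_filter_add_card_filter_not (s := univ) fun v ↦ G.degree v = 1
  rw [card_univ] at hsplit
  omega

theorem tree_matching_le_internal {V : Type*} [Fintype V] [DecidableEq V]
    (G : SimpleGraph V) [DecidableRel G.Adj] (hT : G.IsTree)
    (hn : 2 < Fintype.card V)
    (M : Finset (Sym2 V)) (hM : IsMatchingF G M) :
    M.card ≤ Fintype.card V - (Finset.univ.filter fun v => G.degree v = 1).card :=
  tree_matching_le_internal_general G hT hn M hM
end

section
/- For any graph G, the independence number of G is at most its annihilation number: α(G) ≤ a(G). -/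
open SimpleGraph Finset

noncomputable def indepNum {V : Type*} [Fintype V] (G : SimpleGraph V) : ℕ :=
  sSup {k | ∃ S : Finset V, (∀ v ∈ S, ∀ w ∈ S, ¬ G.Adj v w) ∧ S.card = k}

noncomputable def annNumG {V : Type*} [Fintype V] [DecidableEq V]
    (G : SimpleGraph V) [DecidableRel G.Adj] : ℕ :=
  sSup {a | ∃ A : Finset V, A.card = a ∧ (∑ v ∈ A, G.degree v) ≤ G.edgeFinset.card}

/-! An edge has at most one endpoint in an independent set `S`, so the edge sets incident to the
vertices of `S` are pairwise disjoint and the degrees over `S` count distinct edges. Hence every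
independent set is admissible in the supremum defining the annihilation number.
(`annNumG` takes the supremum over all vertex sets, which equals the prefix-of-sorted-degrees
definition, since the `a` smallest degrees minimise the degree sum among `a`-sets.) -/

lemma sum_degree_le_card_edgeFinset_of_indep {V : Type*} [Fintype V] [DecidableEq V]
    (G : SimpleGraph V) [DecidableRel G.Adj] (S : Finset V)
    (hS : ∀ v ∈ S, ∀ w ∈ S, ¬ G.Adj v w) :
    ∑ v ∈ S, G.degree v ≤ #G.edgeFinset := by
  have hdisj : (S : Set V).PairwiseDisjoint (G.incidenceFinset ·) := by
    intro v hv w hw hvw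
    refine disjoint_left.2 fun e hev hew => hS v hv w hw ?_
    exact G.adj_of_mem_incidenceSet hvw ((G.mem_incidenceFinset v e).1 hev)
      ((G.mem_incidenceFinset w e).1 hew)
  calc ∑ v ∈ S, G.degree v = #(S.biUnion (G.incidenceFinset ·)) := by
        simp_rw [card_biUnion hdisj, card_incidenceFinset_eq_degree]
    _ ≤ #G.edgeFinset := card_le_card (biUnion_subset.2 fun v _ => G.incidenceFinset_subset v)

theorem indepNum_le_annNum {V : Type*} [Fintype V] [DecidableEq V]
    (G : SimpleGraph V) [DecidableRel G.Adj] :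
    _root_.indepNum G ≤ annNumG G := by
  have hbdd : BddAbove {a | ∃ A : Finset V, #A = a ∧ ∑ v ∈ A, G.degree v ≤ #G.edgeFinset} :=
    ⟨Fintype.card V, fun _ ⟨A, hA, _⟩ => hA ▸ card_le_univ A⟩
  have hne : {k | ∃ S : Finset V, (∀ v ∈ S, ∀ w ∈ S, ¬ G.Adj v w) ∧ #S = k}.Nonempty :=
    ⟨0, ∅, by simp⟩
  refine csSup_le_csSup hbdd hne ?_
  rintro k ⟨S, hS, rfl⟩
  exact ⟨S, rfl, sum_degree_le_card_edgeFinset_of_indep G S hS⟩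
end

section
/- If T is a tree of order n, then the nullity of T satisfies null(T) ≤ 2a(T) - n, where a(T) is the annihilation number of T. -/
open SimpleGraph Finset

/-!
The nullity is `n - rank A`, so it suffices to find a matching with `m` edges such that
`rank A ≥ 2m`, together with an independent set `I` with `|I| ≥ n - m`. The degrees of an
independent set sum to at most the number of edges, so `a(T) ≥ |I|`, and then
`null(T) ≤ n - 2m ≤ 2a(T) - n`. The matching and `I` come from König's theorem for forests:
repeatedly match a leaf with its neighbour `x`, put `x` into a vertex cover, and delete the edges
at `x`. The complement of the cover is `I`. For the rank bound, note that the subgraph induced by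
the matched vertices has a unique perfect matching, again by stripping leaves. So exactly one
term in the Leibniz expansion of its adjacency determinant is nonzero.
-/

namespace Equiv.Perm

variable {V : Type*}

theorem swap_mul_apply_of_ne [DecidableEq V] {σ : Perm V} {u x v : V} (hu : σ u = x)
    (hx : σ x = u) (hvu : v ≠ u) (hvx : v ≠ x) : (swap u x * σ) v = σ v := by
  rw [mul_apply, swap_apply_of_ne_of_ne]
  · exact fun h => hvx (σ.injective (h.trans hx.symm))
  · exact fun h => hvu (σ.injective (h.trans hu.symm))

theorem card_support_swap_mul_eq_add_two [DecidableEq V] [Fintype V] {σ : Perm V} {u x : V}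
    (hux : u ≠ x) (hu : σ u = u) (hx : σ x = x) : #(swap u x * σ).support = #σ.support + 2 := by
  have hdisj : Disjoint (swap u x) σ := fun v => by
    by_cases hv : v = u ∨ v = x
    · rcases hv with rfl | rfl <;> simp [*]
    · push Not at hv; exact .inl (swap_apply_of_ne_of_ne hv.1 hv.2)
  rw [hdisj.support_mul, card_union_of_disjoint (disjoint_iff_disjoint_support.1 hdisj),
    card_support_swap hux, add_comm]

end Equiv.Perm

namespace SimpleGraph

open Equiv

variable {V : Type*} {G : SimpleGraph V}

theorem IsAcyclic.exists_leaf [Finite V] (hG : G.IsAcyclic) {a b : V} (hab : G.Adj a b) :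
    ∃ u x, G.Adj u x ∧ ∀ y, G.Adj u y → y = x := by
  have : Nonempty V := ⟨a⟩
  obtain ⟨u, v, p, hp, hmax⟩ := Walk.exists_isPath_forall_isPath_length_le_length G
  have hnil : ¬p.Nil := fun h => by
    simpa [Walk.length_eq_zero_iff.mpr h] using hmax a b (Walk.cons hab .nil) (by simp [hab.ne])
  refine ⟨u, p.snd, p.adj_snd hnil, fun y hy => hG.eq_snd_of_adj_start hp hy ?_⟩
  by_contra hy'
  simpa using hmax _ _ (p.cons hy.symm) (hp.cons hy')

theorem deleteIncidenceSet_lt {u x : V} (hux : G.Adj u x) : G.deleteIncidenceSet x < G :=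
  lt_of_le_of_ne (G.deleteIncidenceSet_le x) fun h => by
    have := hux
    rw [← h, deleteIncidenceSet_adj] at this
    exact this.2.2 rfl

/-- Matchings are encoded by such permutations: the product of the transpositions along the edges
of a matching is one. -/
def IsNeighborPerm (G : SimpleGraph V) (σ : Perm V) : Prop :=
  ∀ v, σ v ≠ v → G.Adj v (σ v)

theorem IsNeighborPerm.apply_eq_of_leaf {σ : Perm V} (hσ : G.IsNeighborPerm σ) {u x : V}
    (hleaf : ∀ y, G.Adj u y → y = x) (hu : σ u ≠ u) : σ u = x ∧ σ x = u := by
  refine ⟨hleaf _ (hσ u hu), ?_⟩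
  have hmoved : σ (σ⁻¹ u) ≠ σ⁻¹ u := fun h => hu (by simpa using congrArg σ h)
  have := hleaf _ (by simpa using (hσ _ hmoved).symm)
  simp [← this]

theorem IsNeighborPerm.swap_mul_deleteIncidenceSet [DecidableEq V] {σ : Perm V}
    (hσ : G.IsNeighborPerm σ) {u x : V} (hu : σ u = x) (hx : σ x = u) :
    (G.deleteIncidenceSet x).IsNeighborPerm (swap u x * σ) := by
  intro v hv
  have hvu : v ≠ u := by rintro rfl; simp [hu] at hv
  have hvx : v ≠ x := by rintro rfl; simp [hx] at hv
  rw [Perm.swap_mul_apply_of_ne hu hx hvu hvx] at hv ⊢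
  exact deleteIncidenceSet_adj.2 ⟨hσ v hv, hvx, fun h => hvu (σ.injective (h.trans hu.symm))⟩

theorem IsNeighborPerm.swap_mul [DecidableEq V] {H : SimpleGraph V} {σ : Perm V}
    (hσ : H.IsNeighborPerm σ) (hHG : H ≤ G) {u x : V} (hux : G.Adj u x) (hu : σ u = u)
    (hx : σ x = x) : G.IsNeighborPerm (swap u x * σ) := by
  intro v hv
  by_cases hvu : v = u
  · subst hvu; simpa [hu] using hux
  by_cases hvx : v = x
  · subst hvx; simpa [hx] using hux.symm
  have hσv : swap u x (σ v) = σ v :=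
    swap_apply_of_ne_of_ne (fun h => hvu (σ.injective (h.trans hu.symm)))
      (fun h => hvx (σ.injective (h.trans hx.symm)))
  rw [Perm.mul_apply, hσv] at hv ⊢
  exact hHG (hσ v hv)

theorem IsAcyclic.exists_isNeighborPerm_isVertexCover [Fintype V] [DecidableEq V]
    (hG : G.IsAcyclic) :
    ∃ σ : Perm V, G.IsNeighborPerm σ ∧
      ∃ C : Finset V, G.IsVertexCover C ∧ 2 * #C ≤ #σ.support := by
  induction G using WellFoundedLT.induction with
  | ind G ih =>
  by_cases hE : ∃ a b, G.Adj a b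
  swap
  · push Not at hE
    exact ⟨1, fun v hv => (hv rfl).elim, ∅, fun v w h => (hE v w h).elim, by simp⟩
  obtain ⟨a, b, hab⟩ := hE
  obtain ⟨u, x, hux, hleaf⟩ := hG.exists_leaf hab
  obtain ⟨σ, hσ, C, hC, hCσ⟩ :=
    ih _ (deleteIncidenceSet_lt hux) (hG.anti (G.deleteIncidenceSet_le x))
  have hfix : ∀ v, ¬(G.deleteIncidenceSet x).Adj v (σ v) → σ v = v :=
    fun v h => not_not.1 (mt (hσ v) h)
  have hu : σ u = u := hfix u fun h =>
    (deleteIncidenceSet_adj.1 h).2.2 (hleaf _ (deleteIncidenceSet_adj.1 h).1)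
  have hx : σ x = x := hfix x fun h => (deleteIncidenceSet_adj.1 h).2.1 rfl
  refine ⟨swap u x * σ, hσ.swap_mul (G.deleteIncidenceSet_le x) hux hu hx, insert x C, ?_, ?_⟩
  · intro v w hvw
    simp only [coe_insert, Set.mem_insert_iff]
    by_cases hv : v = x
    · exact .inl (.inl hv)
    by_cases hw : w = x
    · exact .inr (.inl hw)
    exact (hC (deleteIncidenceSet_adj.2 ⟨hvw, hv, hw⟩)).imp .inr .inr
  · rw [Perm.card_support_swap_mul_eq_add_two hux.ne hu hx]
    have := card_insert_le x C
    omega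

theorem IsAcyclic.eq_of_isNeighborPerm [Finite V] [DecidableEq V] (hG : G.IsAcyclic)
    {σ τ : Perm V} (hσ : G.IsNeighborPerm σ) (hτ : G.IsNeighborPerm τ)
    (hσG : ∀ v ∈ G.support, σ v ≠ v) (hτG : ∀ v ∈ G.support, τ v ≠ v) : σ = τ := by
  induction G using WellFoundedLT.induction generalizing σ τ with
  | ind G ih =>
  by_cases hE : ∃ a b, G.Adj a b
  swap
  · push Not at hE
    have hone : ∀ ρ : Perm V, G.IsNeighborPerm ρ → ρ = 1 :=
      fun ρ hρ => Perm.ext fun v => by_contra fun h => hE _ _ (hρ v h)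
    rw [hone σ hσ, hone τ hτ]
  obtain ⟨a, b, hab⟩ := hE
  obtain ⟨u, x, hux, hleaf⟩ := hG.exists_leaf hab
  have hu : u ∈ G.support := ⟨x, hux⟩
  obtain ⟨hσu, hσx⟩ := hσ.apply_eq_of_leaf hleaf (hσG u hu)
  obtain ⟨hτu, hτx⟩ := hτ.apply_eq_of_leaf hleaf (hτG u hu)
  have hmoved : ∀ ρ : Perm V, (∀ v ∈ G.support, ρ v ≠ v) → ρ u = x → ρ x = u →
      ∀ v ∈ (G.deleteIncidenceSet x).support, (swap u x * ρ) v ≠ v := by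
    rintro ρ hρG hρu hρx v ⟨w, hvw⟩
    obtain ⟨hvw, hvx, hwx⟩ := deleteIncidenceSet_adj.1 hvw
    have hvu : v ≠ u := by rintro rfl; exact hwx (hleaf w hvw)
    rw [Perm.swap_mul_apply_of_ne hρu hρx hvu hvx]
    exact hρG v ⟨w, hvw⟩
  refine mul_left_cancel (a := swap u x) <| ih _ (deleteIncidenceSet_lt hux)
    (hG.anti (G.deleteIncidenceSet_le x)) (hσ.swap_mul_deleteIncidenceSet hσu hσx)
    (hτ.swap_mul_deleteIncidenceSet hτu hτx) (hmoved σ hσG hσu hσx) (hmoved τ hτG hτu hτx)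

theorem IsAcyclic.det_adjMatrix_ne_zero [Fintype V] [DecidableEq V] [DecidableRel G.Adj]
    {R : Type*} [CommRing R] [Nontrivial R] (hG : G.IsAcyclic) {σ : Perm V}
    (hσ : ∀ v, G.Adj v (σ v)) : (G.adjMatrix R).det ≠ 0 := by
  rw [Matrix.det_apply, sum_eq_single σ]
  · have hprod : ∏ v, G.adjMatrix R (σ v) v = 1 :=
      prod_eq_one fun v _ => by simp [adjMatrix_apply, (hσ v).symm]
    rw [hprod]
    rcases Int.units_eq_one_or (Perm.sign σ) with h | h <;> simp [h]
  · intro π _ hπσ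
    obtain ⟨v, hv⟩ : ∃ v, ¬G.Adj v (π v) := by
      by_contra! hπ
      exact hπσ (hG.eq_of_isNeighborPerm (fun v _ => hπ v) (fun v _ => hσ v)
        (fun v _ => (hπ v).ne') fun v _ => (hσ v).ne')
    rw [prod_eq_zero (mem_univ v) (by simp [adjMatrix_apply, G.adj_comm, hv]), smul_zero]
  · exact fun h => (h (mem_univ σ)).elim

theorem IsAcyclic.card_support_le_rank_adjMatrix [Fintype V] [DecidableEq V]
    [DecidableRel G.Adj] {R : Type*} [CommRing R] [IsDomain R] (hG : G.IsAcyclic) {σ : Perm V}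
    (hσ : G.IsNeighborPerm σ) : #σ.support ≤ (G.adjMatrix R).rank := by
  let H := G.induce (σ.support : Set V)
  have hdet : (H.adjMatrix R).det ≠ 0 :=
    (hG.induce _).det_adjMatrix_ne_zero (σ := σ.subtypePerm fun _ => Perm.apply_mem_support)
      fun v => hσ v (Perm.mem_support.1 v.2)
  have hsub : H.adjMatrix R = (G.adjMatrix R).submatrix (↑) (↑) := by
    ext v w
    simp [adjMatrix_apply, H]
  calc #σ.support = (H.adjMatrix R).rank := by
        rw [Matrix.rank_of_det_ne_zero hdet]; exact (Fintype.card_coe _).symm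
    _ ≤ (G.adjMatrix R).rank := hsub ▸ Matrix.rank_submatrix_le _ _ _

theorem IsIndepSet.sum_degree_le_card_edgeFinset [Fintype V] [DecidableEq V]
    [DecidableRel G.Adj] {I : Finset V} (hI : G.IsIndepSet I) :
    ∑ v ∈ I, G.degree v ≤ #G.edgeFinset := by
  simp_rw [← card_incidenceFinset_eq_degree]
  rw [← card_biUnion]
  · exact card_le_card (biUnion_subset.2 fun v _ => G.incidenceFinset_subset v)
  · intro v hv w hw hvw
    rw [Function.onFun, disjoint_iff_inter_eq_empty, ← coe_inj, coe_inter, coe_incidenceFinset,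
      coe_incidenceFinset, coe_empty]
    exact G.incidenceSet_inter_incidenceSet_of_not_adj (hI hv hw hvw) hvw

end SimpleGraph

theorem card_le_annNumG {V : Type*} [Fintype V] [DecidableEq V] {G : SimpleGraph V}
    [DecidableRel G.Adj] {A : Finset V} (hA : ∑ v ∈ A, G.degree v ≤ #G.edgeFinset) :
    #A ≤ annNumG G :=
  le_csSup ⟨Fintype.card V, fun _ ⟨B, hB, _⟩ => hB ▸ card_le_univ B⟩ ⟨A, rfl, hA⟩

theorem tree_nullity_le {V : Type*} [Fintype V] [DecidableEq V]
    (G : SimpleGraph V) [DecidableRel G.Adj] (hT : G.IsTree) :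
    ((Fintype.card V - (G.adjMatrix ℚ).rank : ℕ) : ℤ) ≤
      2 * (annNumG G : ℤ) - Fintype.card V := by
  obtain ⟨σ, hσ, C, hC, hCσ⟩ := hT.isAcyclic.exists_isNeighborPerm_isVertexCover
  have hrank := hT.isAcyclic.card_support_le_rank_adjMatrix (R := ℚ) hσ
  have hann : #Cᶜ ≤ annNumG G := card_le_annNumG <|
    IsIndepSet.sum_degree_le_card_edgeFinset <| by
      rwa [coe_compl, isIndepSet_compl_iff_isVertexCover]
  have := card_le_univ σ.support
  have := card_compl C
  omega
end

section
/- If T is a tree of order n with l leaves, then the nullity of T satisfies null(T) ≥ n - 2·min(n - l, ⌊n/2⌋); in particular if l ≥ ⌈n/2⌉ then null(T) ≥ 2l - n. -/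
open SimpleGraph Finset

/-!
If `C` is a vertex cover of a graph, every row of the adjacency matrix indexed outside `C` is
supported on `C`, so the row space is spanned by the `|C|` rows indexed by `C` together with the
`|C|` unit vectors at `C`; hence `rank A ≤ 2|C|`. In a tree on more than two vertices no two leaves
are adjacent, so the `n - l` non-leaves form a vertex cover, and the smaller colour class of a
2-colouring is a vertex cover with at most `⌊n/2⌋` vertices.
-/

theorem Submodule.mem_span_range_single_of_forall_notMem {ι R : Type*} [Fintype ι]
    [DecidableEq ι] [Semiring R] (s : Finset ι) (f : ι → R) (hf : ∀ i ∉ s, f i = 0) :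
    f ∈ span R (Set.range fun i : s => Pi.single (i : ι) (1 : R)) := by
  rw [← univ_sum_single f]
  refine sum_mem fun i _ => ?_
  by_cases hi : i ∈ s
  · have hsmul : Pi.single i (f i) = f i • Pi.single i (1 : R) := by
      rw [← Pi.single_smul, smul_eq_mul, mul_one]
    rw [hsmul]
    exact smul_mem _ _ (subset_span ⟨⟨i, hi⟩, rfl⟩)
  · rw [hf i hi, Pi.single_zero]
    exact zero_mem _

namespace SimpleGraph

variable {V : Type*} [Fintype V] {G : SimpleGraph V}

theorem IsVertexCover.rank_adjMatrix_le [DecidableEq V] [DecidableRel G.Adj] (K : Type*)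
    [Field K] {C : Finset V} (hC : G.IsVertexCover C) : (G.adjMatrix K).rank ≤ 2 * #C := by
  let b : C ⊕ C → V → K := Sum.elim (fun u => G.adjMatrix K u) (fun u => Pi.single (u : V) 1)
  have hrow : ∀ v, G.adjMatrix K v ∈ Submodule.span K (Set.range b) := by
    intro v
    by_cases hv : v ∈ C
    · exact Submodule.subset_span ⟨.inl ⟨v, hv⟩, rfl⟩
    · have hsingle : Set.range (fun u : C => Pi.single (u : V) (1 : K)) ⊆ Set.range b :=
        fun _ ⟨u, hu⟩ => ⟨.inr u, hu⟩
      refine Submodule.span_mono hsingle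
        (Submodule.mem_span_range_single_of_forall_notMem C _ fun u hu => ?_)
      have hvu : ¬G.Adj v u := fun hvu => by simpa [hv, hu] using hC hvu
      rw [adjMatrix_apply, if_neg hvu]
  rw [Matrix.rank_eq_finrank_span_row]
  calc Module.finrank K (Submodule.span K (Set.range (G.adjMatrix K).row))
      ≤ Module.finrank K (Submodule.span K (Set.range b)) :=
        Submodule.finrank_mono (Submodule.span_le.2 (Set.range_subset_iff.2 hrow))
    _ ≤ Fintype.card (C ⊕ C) := finrank_range_le_card b
    _ = 2 * #C := by simp [two_mul]

theorem Colorable.exists_isVertexCover_two_mul_card_le (hG : G.Colorable 2) :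
    ∃ C : Finset V, G.IsVertexCover C ∧ 2 * #C ≤ Fintype.card V := by
  obtain ⟨c⟩ := hG
  let X : Finset V := {v | c v = 0}
  let Y : Finset V := {v | c v ≠ 0}
  have hX : G.IsVertexCover X := fun u v huv => by
    have := c.valid huv
    simp only [X, coe_filter, mem_univ, true_and, Set.mem_ofPred_eq]
    omega
  have hY : G.IsVertexCover Y := fun u v huv => by
    have := c.valid huv
    simp only [Y, coe_filter, mem_univ, true_and, Set.mem_ofPred_eq]
    omega
  have hXY : #X + #Y = Fintype.card V := card_filter_add_card_filter_not _
  rcases le_total #X #Y with h | h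
  · exact ⟨X, hX, by omega⟩
  · exact ⟨Y, hY, by omega⟩

theorem Preconnected.isVertexCover_setOf_degree_ne_one [DecidableEq V] [DecidableRel G.Adj]
    (hG : G.Preconnected) (hV : 2 < Fintype.card V) :
    G.IsVertexCover {v | G.degree v ≠ 1} := by
  intro u v huv
  by_contra! h
  obtain ⟨hu, hv⟩ : G.degree u = 1 ∧ G.degree v = 1 := by simpa using h
  have hclosed : ∀ a b, G.Adj a b → a ∈ ({u, v} : Finset V) → b ∈ ({u, v} : Finset V) := by
    intro a b hab ha
    rcases mem_insert.1 ha with rfl | ha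
    · simp [(degree_eq_one_iff_existsUnique_adj.1 hu).unique hab huv]
    · rw [mem_singleton.1 ha] at hab
      simp [(degree_eq_one_iff_existsUnique_adj.1 hv).unique hab huv.symm]
  have hall : ∀ w, w ∈ ({u, v} : Finset V) := fun w => by
    induction (reachable_iff_reflTransGen u w).1 (hG u w) with
    | refl => simp
    | tail _ hab ih => exact hclosed _ _ hab ih
  have hcard : Fintype.card V ≤ 2 := calc
    Fintype.card V = #(univ : Finset V) := card_univ.symm
    _ ≤ #{u, v} := card_le_card fun w _ => hall w
    _ ≤ 2 := card_le_two
  omega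

end SimpleGraph

theorem tree_nullity_ge_general {V : Type*} [Fintype V]
    (G : SimpleGraph V) [DecidableRel G.Adj] (hT : G.IsTree)
    (hn : 2 < Fintype.card V) :
    (((Fintype.card V - (G.adjMatrix ℚ).rank : ℕ) : ℤ) ≥
      (Fintype.card V : ℤ) -
        2 * min ((Fintype.card V : ℤ) -
            ((Finset.univ.filter fun v => G.degree v = 1).card : ℤ))
          ((Fintype.card V / 2 : ℕ) : ℤ)) ∧
    ((Fintype.card V + 1) / 2 ≤ (Finset.univ.filter fun v => G.degree v = 1).card →
      ((Fintype.card V - (G.adjMatrix ℚ).rank : ℕ) : ℤ) ≥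
        2 * ((Finset.univ.filter fun v => G.degree v = 1).card : ℤ) - Fintype.card V) := by
  classical
  have h_leaves : (G.adjMatrix ℚ).rank + 2 * #{v | G.degree v = 1} ≤ 2 * Fintype.card V := by
    have hcover : G.IsVertexCover ↑(univ.filter fun v => ¬G.degree v = 1) := by
      simpa using hT.connected.preconnected.isVertexCover_setOf_degree_ne_one hn
    have hrank := hcover.rank_adjMatrix_le ℚ
    have hsplit := card_filter_add_card_filter_not (s := univ) fun v => G.degree v = 1
    rw [card_univ] at hsplit
    omega
  obtain ⟨C, hC, hCcard⟩ := hT.colorable_two.exists_isVertexCover_two_mul_card_le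
  have h_half : (G.adjMatrix ℚ).rank ≤ 2 * (Fintype.card V / 2) :=
    (hC.rank_adjMatrix_le ℚ).trans (by omega)
  omega

theorem tree_nullity_ge {V : Type*} [Fintype V] [DecidableEq V]
    (G : SimpleGraph V) [DecidableRel G.Adj] (hT : G.IsTree)
    (hn : 2 < Fintype.card V) :
    (((Fintype.card V - (G.adjMatrix ℚ).rank : ℕ) : ℤ) ≥
      (Fintype.card V : ℤ) -
        2 * min ((Fintype.card V : ℤ) -
            ((Finset.univ.filter fun v => G.degree v = 1).card : ℤ))
          ((Fintype.card V / 2 : ℕ) : ℤ)) ∧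
    ((Fintype.card V + 1) / 2 ≤ (Finset.univ.filter fun v => G.degree v = 1).card →
      ((Fintype.card V - (G.adjMatrix ℚ).rank : ℕ) : ℤ) ≥
        2 * ((Finset.univ.filter fun v => G.degree v = 1).card : ℤ) - Fintype.card V) :=
  tree_nullity_ge_general G hT hn
end

section
/- Let s be a tree degree sequence of length n > 2 with l entries equal to 1 and annihilation number a(s). If l < ⌈n/2⌉, then there exists a tree T with degree sequence s and matching number ν(T) = ⌊n/2⌋. -/
open SimpleGraph Finset

noncomputable def degC {n : ℕ} (G : SimpleGraph (Fin n)) (v : Fin n) : ℕ := by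
  classical exact G.degree v

/-- `G` has degree sequence `d 0, d 1, …, d (n-1)`. -/
def HasDegSeq {n : ℕ} (d : ℕ → ℕ) (G : SimpleGraph (Fin n)) : Prop :=
  ∃ σ : Equiv.Perm (Fin n), ∀ i : Fin n, degC G (σ i) = d i

/-- Nullity of the adjacency matrix over ℚ. -/
noncomputable def nullityC {n : ℕ} (G : SimpleGraph (Fin n)) : ℕ := by
  classical exact n - (G.adjMatrix ℚ).rank

/-- Annihilation number of the sequence `d` with respect to `n - 1` edges. -/
noncomputable def annNumS (n : ℕ) (d : ℕ → ℕ) : ℕ :=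
  sSup {a | a ≤ n ∧ (∑ i ∈ Finset.range a, d i) ≤ n - 1}

/-!
Pair the vertices as `{2j, 2j+1}` for `j < ⌊n/2⌋`, with one vertex left over when `n` is odd.
Vertex `2j` gets the `j`-th largest degree and `2j+1` the `j`-th largest of the lower half of
the sequence, so `2j` has degree at least `2` exactly because `l < ⌈n/2⌉`. Grow the tree from the
root `0`: `2j+1` hangs below `2j`, and the vertices `2, 4, 6, …` are attached in turn, greedily, to
the remaining free degree of the earlier vertices. Since the pairs have non-increasing degree sums,
the free degree never runs out too early, and the pair edges form a matching of size `⌊n/2⌋`.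
-/

lemma IsMatchingF.two_mul_card_le {V : Type*} [Fintype V] {G : SimpleGraph V}
    {M : Finset (Sym2 V)} (hM : IsMatchingF G M) : 2 * #M ≤ Fintype.card V := by
  classical
  have hdisj : (M : Set (Sym2 V)).PairwiseDisjoint Sym2.toFinset := fun e he f hf hef =>
    Finset.disjoint_left.2 fun v hve hvf =>
      hM.2 e he f hf hef v ⟨Sym2.mem_toFinset.1 hve, Sym2.mem_toFinset.1 hvf⟩
  calc 2 * #M = ∑ e ∈ M, #e.toFinset := by
        rw [sum_congr rfl fun e he => Sym2.card_toFinset_of_not_isDiag e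
          (G.not_isDiag_of_mem_edgeSet (hM.1 e he)), sum_const, smul_eq_mul, mul_comm]
    _ = #(M.biUnion Sym2.toFinset) := (card_biUnion hdisj).symm
    _ ≤ Fintype.card V := card_le_univ _

lemma matchNum_eq_of_isMatchingF {V : Type*} [Fintype V] {G : SimpleGraph V}
    {M : Finset (Sym2 V)} (hM : IsMatchingF G M) (hcard : #M = Fintype.card V / 2) :
    matchNum G = Fintype.card V / 2 := by
  refine IsGreatest.csSup_eq ⟨⟨M, hM, hcard⟩, ?_⟩
  rintro _ ⟨M', hM', rfl⟩
  have := hM'.two_mul_card_le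
  omega

lemma card_filter_fin_val (n : ℕ) (P : ℕ → Prop) [DecidablePred P] :
    #{w : Fin n | P w} = #{w ∈ range n | P w} := by
  refine card_bij (fun w _ => w.val) (by simp) (fun a _ b _ h => Fin.ext h) fun b hb => ?_
  simp only [Finset.mem_filter, Finset.mem_range] at hb
  exact ⟨⟨b, hb.1⟩, by simpa using hb.2, rfl⟩

def parentGraph (n : ℕ) (p : ℕ → ℕ) : SimpleGraph (Fin n) where
  Adj u v := (v < u ∧ p u = v) ∨ (u < v ∧ p v = u)
  symm := ⟨fun _ _ h => h.symm⟩
  loopless := ⟨fun _ h => by rcases h with h | h <;> exact lt_irrefl _ h.1⟩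

namespace parentGraph

variable {n : ℕ} {p : ℕ → ℕ}

lemma adj_iff {u v : Fin n} :
    (parentGraph n p).Adj u v ↔ (v < u ∧ p u = v) ∨ (u < v ∧ p v = u) :=
  Iff.rfl

variable (hp : ∀ v, 0 < v → v < n → p v < v)
include hp

def parent (v : Fin n) (hv : 0 < v.val) : Fin n :=
  ⟨p v, (hp v hv v.isLt).trans v.isLt⟩

lemma adj_parent (v : Fin n) (hv : 0 < v.val) : (parentGraph n p).Adj v (parent hp v hv) :=
  Or.inl ⟨hp v hv v.isLt, rfl⟩

lemma connected (hn : 0 < n) : (parentGraph n p).Connected := by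
  have hroot : ∀ v : Fin n, (parentGraph n p).Reachable v ⟨0, hn⟩ := by
    rintro ⟨v, hv⟩
    induction v using Nat.strong_induction_on with
    | _ v ih =>
      rcases Nat.eq_zero_or_pos v with rfl | hv0
      · rfl
      · exact (adj_parent hp ⟨v, hv⟩ hv0).reachable.trans (ih _ (hp v hv0 hv) _)
  exact (connected_iff _).2 ⟨fun u v => (hroot u).trans (hroot v).symm, ⟨⟨0, hn⟩⟩⟩

lemma card_edgeSet : Nat.card (parentGraph n p).edgeSet = n - 1 := by
  let toEdge (v : {v : Fin n // 0 < v.val}) : (parentGraph n p).edgeSet :=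
    ⟨s(v.1, parent hp v.1 v.2), adj_parent hp v.1 v.2⟩
  have hbij : Function.Bijective toEdge := by
    refine ⟨?_, ?_⟩
    · rintro ⟨v, hv⟩ ⟨w, hw⟩ h
      simp only [toEdge, Subtype.mk.injEq, Sym2.eq_iff, parent, Fin.ext_iff] at h
      have := hp v hv v.isLt
      have := hp w hw w.isLt
      exact Subtype.ext (Fin.ext (show v.val = w.val by omega))
    · rintro ⟨e, he⟩
      induction e using Sym2.ind with
      | h u v =>
        rw [mem_edgeSet, adj_iff] at he
        rcases he with ⟨hvu, hpu⟩ | ⟨huv, hpv⟩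
        · exact ⟨⟨u, by omega⟩, by simp [toEdge, parent, hpu]⟩
        · exact ⟨⟨v, by omega⟩, by simp [toEdge, parent, hpv, Sym2.eq_swap]⟩
  have hroot := Finset.card_filter_add_card_filter_not (s := (univ : Finset (Fin n)))
    (fun v : Fin n => v.val < 1)
  rw [Fin.card_filter_val_lt, card_univ, Fintype.card_fin] at hroot
  simp only [not_lt, Nat.one_le_iff_ne_zero, ← Nat.pos_iff_ne_zero] at hroot
  rw [← Nat.card_congr (Equiv.ofBijective toEdge hbij), Nat.card_eq_fintype_card,
    Fintype.card_subtype]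
  omega

lemma isTree (hn : 0 < n) : (parentGraph n p).IsTree := by
  rw [isTree_iff_connected_and_card, card_edgeSet hp, Nat.card_eq_fintype_card, Fintype.card_fin]
  exact ⟨connected hp hn, by omega⟩

lemma degC_eq (v : Fin n) :
    degC (parentGraph n p) v = #{w ∈ range n | v.val < w ∧ p w = v} + if v.val = 0 then 0 else 1 := by
  classical
  have hsplit : #{w | (parentGraph n p).Adj v w}
      = #{w : Fin n | v.val < w ∧ p w = v} + #{w : Fin n | w < v ∧ p v = w} := by
    rw [← card_union_of_disjoint]
    · congr 1
      ext w
      simp only [Finset.mem_filter, Finset.mem_union, mem_univ, true_and]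
      exact Or.comm
    · rw [disjoint_filter]
      intro w _ h1 h2
      exact absurd h1.1 (by have := h2.1; omega)
  have hparent : #{w : Fin n | w < v ∧ p v = w} = if v.val = 0 then 0 else 1 := by
    split_ifs with hv
    · simp [Fin.lt_def, hv]
    · have := hp v (by omega) v.isLt
      rw [card_eq_one]
      refine ⟨parent hp v (by omega), ?_⟩
      ext w
      simp only [Finset.mem_filter, mem_univ, true_and, mem_singleton, parent, Fin.ext_iff,
        Fin.lt_def]
      constructor
      · exact fun h => h.2.symm
      · exact fun h => ⟨by omega, h.symm⟩
  rw [degC, ← card_neighborFinset_eq_degree, neighborFinset_eq_filter, hsplit, hparent,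
    card_filter_fin_val n (fun w => v.val < w ∧ p w = v)]

end parentGraph

lemma exists_assignment_of_lt_partialSum (e b : ℕ → ℕ) (m N : ℕ)
    (hsum : ∑ u ∈ range N, e u = m) (hb : ∀ i < m, i < ∑ u ∈ range (b i), e u) :
    ∃ g : ℕ → ℕ, (∀ i < m, g i < b i) ∧ ∀ u < N, #{i ∈ range m | g i = u} = e u := by
  classical
  set E : ℕ → ℕ := fun u => ∑ v ∈ range u, e v with hE
  have hmono : Monotone E := fun u v huv => sum_le_sum_of_subset (range_subset_range.2 huv)
  have hex : ∀ i < m, ∃ u, i < E (u + 1) := fun i hi =>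
    ⟨N, lt_of_lt_of_le (by simp only [hE]; omega) (hmono N.le_succ)⟩
  let g : ℕ → ℕ := fun i => if h : ∃ u, i < E (u + 1) then Nat.find h else 0
  have hg : ∀ i (h : ∃ u, i < E (u + 1)) u, g i = u ↔ E u ≤ i ∧ i < E (u + 1) := by
    intro i h u
    simp only [g, dif_pos h, Nat.find_eq_iff, not_lt]
    refine and_comm.trans (and_congr_left fun _ => ⟨fun hmin => ?_, fun hu v hv => ?_⟩)
    · rcases u with _ | u
      · simp [E]
      · exact hmin u u.lt_succ_self
    · exact (hmono (Nat.succ_le_of_lt hv)).trans hu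
  refine ⟨g, fun i hi => ?_, fun u hu => ?_⟩
  · have hpos : 0 < b i := Nat.pos_of_ne_zero fun h0 => by simpa [h0] using hb i hi
    have := (hg i (hex i hi) (g i)).1 rfl
    by_contra hle
    exact absurd (hb i hi) (not_lt.2 ((hmono (by omega)).trans this.1))
  · have hEm : E (u + 1) ≤ m := hsum ▸ hmono (Nat.succ_le_of_lt hu)
    have : {i ∈ range m | g i = u} = Ico (E u) (E (u + 1)) := by
      ext i
      simp only [Finset.mem_filter, Finset.mem_range, Finset.mem_Ico]
      constructor
      · rintro ⟨hi, hgi⟩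
        exact (hg i (hex i hi) u).1 hgi
      · rintro ⟨h1, h2⟩
        exact ⟨h2.trans_le hEm, (hg i ⟨u, h2⟩ u).2 ⟨h1, h2⟩⟩
    rw [this, Nat.card_Ico]
    simp only [hE, sum_range_succ, Nat.add_sub_cancel_left]

/-- Item `i` of the greedy assignment `g` is the vertex `2i+2`. -/
def matchedParent (g : ℕ → ℕ) (w : ℕ) : ℕ := if w % 2 = 1 then w - 1 else g (w / 2 - 1)

section matchedParent

variable {n : ℕ} {g : ℕ → ℕ}

lemma matchedParent_lt (hg : ∀ i < (n + 1) / 2 - 1, g i < 2 * (i + 1)) (w : ℕ) (hw : 0 < w)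
    (hwn : w < n) : matchedParent g w < w := by
  unfold matchedParent
  split_ifs with hodd
  · omega
  · have := hg (w / 2 - 1) (by omega)
    omega

lemma card_children_matchedParent (hg : ∀ i < (n + 1) / 2 - 1, g i < 2 * (i + 1)) (u : ℕ) :
    #{w ∈ range n | u < w ∧ matchedParent g w = u}
      = (if u % 2 = 0 ∧ u + 1 < n then 1 else 0) + #{i ∈ range ((n + 1) / 2 - 1) | g i = u} := by
  have hsplit : {w ∈ range n | u < w ∧ matchedParent g w = u}
      = {w ∈ range n | w % 2 = 1 ∧ w = u + 1}
        ∪ {i ∈ range ((n + 1) / 2 - 1) | g i = u}.image fun i => 2 * (i + 1) := by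
    ext w
    simp only [Finset.mem_filter, Finset.mem_range, Finset.mem_union, Finset.mem_image]
    unfold matchedParent
    constructor
    · rintro ⟨hw, huw, hpw⟩
      split_ifs at hpw with hodd
      · omega
      · exact Or.inr ⟨w / 2 - 1, ⟨by omega, hpw⟩, by omega⟩
    · rintro (⟨hw, hodd, rfl⟩ | ⟨i, ⟨hi, hgi⟩, rfl⟩)
      · refine ⟨hw, by omega, ?_⟩
        rw [if_pos hodd]
        omega
      · have := hg i hi
        refine ⟨by omega, by omega, ?_⟩
        rw [if_neg (by omega), show 2 * (i + 1) / 2 - 1 = i by omega, hgi]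
  have hmate : #{w ∈ range n | w % 2 = 1 ∧ w = u + 1} = if u % 2 = 0 ∧ u + 1 < n then 1 else 0 := by
    split_ifs with hu
    · rw [card_eq_one]
      exact ⟨u + 1, by ext w; simp only [Finset.mem_filter, Finset.mem_range, mem_singleton]; omega⟩
    · rw [card_eq_zero, filter_eq_empty_iff]
      intro w hw
      rw [Finset.mem_range] at hw
      omega
  rw [hsplit, card_union_of_disjoint, hmate, card_image_of_injective _ fun a b h => by omega]
  rw [Finset.disjoint_left]
  intro w h1 h2
  simp only [Finset.mem_filter, Finset.mem_image] at h1 h2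
  omega

def matchedPairs (n : ℕ) : Finset (Sym2 (Fin n)) :=
  univ.image fun j : Fin (n / 2) => s(⟨2 * j, by omega⟩, ⟨2 * j + 1, by omega⟩)

lemma isMatchingF_matchedPairs : IsMatchingF (parentGraph n (matchedParent g)) (matchedPairs n) := by
  constructor
  · simp only [matchedPairs, Finset.mem_image, mem_univ, true_and]
    rintro _ ⟨j, rfl⟩
    exact Or.inr ⟨Fin.lt_def.2 (by simp), by simp [matchedParent]⟩
  · simp only [matchedPairs, Finset.mem_image, mem_univ, true_and]
    rintro _ ⟨i, rfl⟩ _ ⟨j, rfl⟩ hij v ⟨hvi, hvj⟩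
    have : i ≠ j := fun h => hij (h ▸ rfl)
    simp only [Sym2.mem_iff, Fin.ext_iff] at hvi hvj
    omega

lemma card_matchedPairs : #(matchedPairs n) = n / 2 := by
  rw [matchedPairs, card_image_of_injective, card_univ, Fintype.card_fin]
  intro i j h
  simp only [Sym2.eq_iff, Fin.ext_iff] at h
  ext
  omega

lemma matchNum_parentGraph_matchedParent : matchNum (parentGraph n (matchedParent g)) = n / 2 := by
  simpa using matchNum_eq_of_isMatchingF isMatchingF_matchedPairs
    (card_matchedPairs.trans (by rw [Fintype.card_fin]))

end matchedParent

/-- Vertex `v` receives the degree `d (foldIndex n v)`: the first vertex `2j` of a pair gets the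
`j`-th largest entry, its partner `2j+1` (and the leftover vertex) an entry of the lower half. -/
def foldIndex (n v : ℕ) : ℕ :=
  if v % 2 = 0 ∧ v + 1 < n then n - 1 - v / 2 else (n + 1) / 2 - 1 - v / 2

/-- The degree that `v` owes to its parent and to its partner below it. -/
def forcedDegree (n v : ℕ) : ℕ :=
  (if v = 0 then 0 else 1) + if v % 2 = 0 ∧ v + 1 < n then 1 else 0

def spareDegree (n : ℕ) (d : ℕ → ℕ) (v : ℕ) : ℕ :=
  d (foldIndex n v) - forcedDegree n v

section foldIndex

variable {n : ℕ} {d : ℕ → ℕ}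

lemma foldIndex_lt {v : ℕ} (hv : v < n) : foldIndex n v < n := by
  unfold foldIndex
  split_ifs <;> omega

lemma foldIndex_injective : Function.Injective fun v : Fin n => foldIndex n v := by
  intro v w h
  have := v.isLt
  have := w.isLt
  simp only [foldIndex] at h
  ext
  split_ifs at h <;> omega

noncomputable def foldPerm (n : ℕ) : Equiv.Perm (Fin n) :=
  Equiv.ofBijective (fun v => ⟨foldIndex n v, foldIndex_lt v.isLt⟩)
    (Finite.injective_iff_bijective.1 fun _ _ h => foldIndex_injective (congrArg Fin.val h))

lemma sum_forcedDegree : ∑ v ∈ range n, forcedDegree n v = n - 1 + n / 2 := by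
  have hmatched : {v ∈ range n | v % 2 = 0 ∧ v + 1 < n} = (range (n / 2)).image (2 * ·) := by
    ext v
    simp only [Finset.mem_filter, Finset.mem_range, Finset.mem_image]
    constructor
    · rintro ⟨-, h0, h1⟩
      exact ⟨v / 2, by omega, by omega⟩
    · rintro ⟨j, hj, rfl⟩
      omega
  simp only [forcedDegree, sum_add_distrib, sum_ite, sum_const_zero, sum_const, smul_eq_mul,
    mul_one, zero_add, hmatched, card_image_of_injective _ (mul_right_injective₀ two_ne_zero),
    card_range, filter_ne', card_erase_eq_ite, Finset.mem_range]
  split_ifs <;> omega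

lemma forcedDegree_le (hpos : ∀ i < n, 1 ≤ d i) (htop : ∀ i, (n + 1) / 2 ≤ i → i < n → 2 ≤ d i)
    {v : ℕ} (hv : v < n) : forcedDegree n v ≤ d (foldIndex n v) := by
  have := hpos _ (foldIndex_lt hv)
  unfold forcedDegree
  split_ifs with h0 hfirst hfirst
  · omega
  · omega
  · have := htop (foldIndex n v) (by unfold foldIndex; rw [if_pos hfirst]; omega)
      (foldIndex_lt hv)
    omega
  · omega

lemma sum_spareDegree (hpos : ∀ i < n, 1 ≤ d i) (htop : ∀ i, (n + 1) / 2 ≤ i → i < n → 2 ≤ d i)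
    (hsum : ∑ i ∈ range n, d i = 2 * n - 2) :
    ∑ v ∈ range n, spareDegree n d v = (n + 1) / 2 - 1 := by
  have hperm : ∑ v ∈ range n, d (foldIndex n v) = ∑ i ∈ range n, d i := by
    simp only [← Fin.sum_univ_eq_sum_range]
    exact Equiv.sum_comp (foldPerm n) (fun i => d i)
  have hsplit : ∑ v ∈ range n, spareDegree n d v + ∑ v ∈ range n, forcedDegree n v
      = ∑ v ∈ range n, d (foldIndex n v) := by
    rw [← sum_add_distrib]
    exact sum_congr rfl fun v hv =>
      Nat.sub_add_cancel (forcedDegree_le hpos htop (Finset.mem_range.1 hv))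
  rw [hperm, hsum, sum_forcedDegree] at hsplit
  omega

/-- Either every pair before `t` has spare degree, or no vertex from `2t` on has any. -/
lemma le_sum_spareDegree (hsort : ∀ i j, i ≤ j → j < n → d i ≤ d j) (hpos : ∀ i < n, 1 ≤ d i)
    (htop : ∀ i, (n + 1) / 2 ≤ i → i < n → 2 ≤ d i) (hsum : ∑ i ∈ range n, d i = 2 * n - 2)
    {t : ℕ} (ht : t < (n + 1) / 2) : t ≤ ∑ v ∈ range (2 * t), spareDegree n d v := by
  rcases Nat.eq_zero_or_pos t with rfl | ht0
  · exact Nat.zero_le _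
  have hfirst_t := htop (n - t) (by omega) (by omega)
  have hsecond_t := hpos ((n + 1) / 2 - t) (by omega)
  by_cases hrich : 4 ≤ d (n - t) + d ((n + 1) / 2 - t)
  · suffices ∀ s ≤ t, s ≤ ∑ v ∈ range (2 * s), spareDegree n d v from this t le_rfl
    intro s hs
    induction s with
    | zero => exact Nat.zero_le _
    | succ s ih =>
      have hfirst := hsort (n - t) (n - 1 - s) (by omega) (by omega)
      have hsecond := hsort ((n + 1) / 2 - t) ((n + 1) / 2 - 1 - s) (by omega) (by omega)
      have hpair : 1 ≤ spareDegree n d (2 * s) + spareDegree n d (2 * s + 1) := by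
        simp only [spareDegree, foldIndex, forcedDegree, show 2 * s / 2 = s by omega,
          show (2 * s + 1) / 2 = s by omega]
        split_ifs <;> omega
      rw [show 2 * (s + 1) = 2 * s + 1 + 1 by ring, sum_range_succ, sum_range_succ]
      have := ih (by omega)
      omega
  · have hzero : ∀ v ∈ Ico (2 * t) n, spareDegree n d v = 0 := by
      intro v hv
      rw [Finset.mem_Ico] at hv
      have hfirst := hsort (n - 1 - v / 2) (n - t) (by omega) (by omega)
      have hsecond := hsort ((n + 1) / 2 - 1 - v / 2) ((n + 1) / 2 - t) (by omega) (by omega)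
      simp only [spareDegree, foldIndex, forcedDegree]
      split_ifs <;> omega
    have := sum_range_add_sum_Ico (spareDegree n d) (show 2 * t ≤ n by omega)
    rw [sum_eq_zero hzero, sum_spareDegree hpos htop hsum] at this
    omega

lemma lt_card_filter_eq_one (hsort : ∀ i j, i ≤ j → j < n → d i ≤ d j) (hpos : ∀ i < n, 1 ≤ d i)
    {i : ℕ} (hi : i < n) (hdi : d i < 2) : i < #{j ∈ range n | d j = 1} := by
  have hsub : range (i + 1) ⊆ {j ∈ range n | d j = 1} := fun j hj => by
    rw [Finset.mem_range] at hj
    have := hsort j i (by omega) hi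
    have := hpos j (by omega)
    exact Finset.mem_filter.2 ⟨Finset.mem_range.2 (by omega), by omega⟩
  simpa using card_le_card hsub

lemma hasDegSeq_parentGraph_matchedParent {g : ℕ → ℕ}
    (hg_lt : ∀ i < (n + 1) / 2 - 1, g i < 2 * (i + 1))
    (hg_card : ∀ u < n, #{i ∈ range ((n + 1) / 2 - 1) | g i = u} = spareDegree n d u)
    (hforced : ∀ v < n, forcedDegree n v ≤ d (foldIndex n v)) :
    HasDegSeq d (parentGraph n (matchedParent g)) := by
  refine ⟨(foldPerm n).symm, fun i => ?_⟩
  set v := (foldPerm n).symm i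
  have hv : foldIndex n v = i := congrArg Fin.val ((foldPerm n).apply_symm_apply i)
  rw [parentGraph.degC_eq (matchedParent_lt hg_lt), card_children_matchedParent hg_lt,
    hg_card v v.isLt, spareDegree, ← hv]
  have := hforced v v.isLt
  unfold forcedDegree at this ⊢
  split_ifs at this ⊢ <;> omega

end foldIndex

theorem exists_tree_max_matching_general (n : ℕ) (d : ℕ → ℕ)
    (hsort : ∀ i j, i ≤ j → j < n → d i ≤ d j)
    (hpos : ∀ i < n, 1 ≤ d i)
    (hsum : ∑ i ∈ Finset.range n, d i = 2 * n - 2)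
    (l : ℕ) (hl : l = ((Finset.range n).filter fun i => d i = 1).card)
    (hlt : l < (n + 1) / 2) :
    ∃ G : SimpleGraph (Fin n), G.IsTree ∧ HasDegSeq d G ∧ matchNum G = n / 2 := by
  have htop : ∀ i, (n + 1) / 2 ≤ i → i < n → 2 ≤ d i := fun i hi hin => by
    by_contra hdi
    have := lt_card_filter_eq_one hsort hpos hin (by omega)
    omega
  obtain ⟨g, hg_lt, hg_card⟩ := exists_assignment_of_lt_partialSum (spareDegree n d)
    (fun i => 2 * (i + 1)) ((n + 1) / 2 - 1) n (sum_spareDegree hpos htop hsum)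
    fun i hi => le_sum_spareDegree hsort hpos htop hsum (t := i + 1) (by omega)
  exact ⟨parentGraph n (matchedParent g), parentGraph.isTree (matchedParent_lt hg_lt) (by omega),
    hasDegSeq_parentGraph_matchedParent hg_lt hg_card fun v hv => forcedDegree_le hpos htop hv,
    matchNum_parentGraph_matchedParent⟩

theorem exists_tree_max_matching (n : ℕ) (d : ℕ → ℕ) (hn : 2 < n)
    (hsort : ∀ i j, i ≤ j → j < n → d i ≤ d j)
    (hpos : ∀ i < n, 1 ≤ d i)
    (hsum : ∑ i ∈ Finset.range n, d i = 2 * n - 2)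
    (l : ℕ) (hl : l = ((Finset.range n).filter fun i => d i = 1).card)
    (hlt : l < (n + 1) / 2) :
    ∃ G : SimpleGraph (Fin n), G.IsTree ∧ HasDegSeq d G ∧ matchNum G = n / 2 :=
  exists_tree_max_matching_general n d hsort hpos hsum l hl hlt
end

section
/- Let s be a tree degree sequence of length n > 2 with l entries equal to 1. The maximum of the matching number over all trees with degree sequence s equals min(n - l, ⌊n/2⌋). -/
open SimpleGraph Finset

section PTree

variable {n : ℕ} {P : ℕ → ℕ}

def pAdj (n : ℕ) (P : ℕ → ℕ) (x y : Fin n) : Prop :=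
  (0 < x.1 ∧ P x.1 = y.1) ∨ (0 < y.1 ∧ P y.1 = x.1)

variable (hP : ∀ k, 0 < k → k < n → P k < k)

def pG (n : ℕ) (P : ℕ → ℕ) (hP : ∀ k, 0 < k → k < n → P k < k) : SimpleGraph (Fin n) where
  Adj := pAdj n P
  symm := by unfold pAdj; tauto
  loopless := by
    refine ⟨?_⟩
    rintro x (⟨hx, he⟩|⟨hx, he⟩) <;>
      exact absurd (hP x.1 hx x.2) (by omega)

instance : DecidableRel (pAdj n P) := fun x y =>
  inferInstanceAs (Decidable ((0 < x.1 ∧ P x.1 = y.1) ∨ (0 < y.1 ∧ P y.1 = x.1)))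

instance : DecidableRel (pG n P hP).Adj := fun x y =>
  inferInstanceAs (Decidable (pAdj n P x y))

lemma pG_adj {x y : Fin n} :
    (pG n P hP).Adj x y ↔ (0 < x.1 ∧ P x.1 = y.1) ∨ (0 < y.1 ∧ P y.1 = x.1) := Iff.rfl

lemma degC_eq_card (G : SimpleGraph (Fin n)) [DecidableRel G.Adj] (v : Fin n) :
    degC G v = #(univ.filter (G.Adj v)) := by
  rw [← neighborFinset_eq_filter, degC]
  have : ∀ (i1 i2 : Fintype (G.neighborSet v)),
      @SimpleGraph.degree _ G v i1 = @SimpleGraph.degree _ G v i2 := by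
    intro i1 i2
    unfold SimpleGraph.degree SimpleGraph.neighborFinset
    congr!
  exact this _ _

lemma card_filter_fin (n : ℕ) (pred : ℕ → Prop) [DecidablePred pred] :
    #(univ.filter (fun y : Fin n => pred y.1)) = #((range n).filter pred) := by
  rw [card_filter, card_filter, Fin.sum_univ_eq_sum_range (fun i => if pred i then 1 else 0)]

/-- children count at nat level -/
def childcnt (n : ℕ) (P : ℕ → ℕ) (v : ℕ) : ℕ :=
  #((range n).filter (fun k => 0 < k ∧ P k = v))

lemma pG_degree (v : Fin n) :
    degC (pG n P hP) v = childcnt n P v.1 + (if 0 < v.1 then 1 else 0) := by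
  classical
  rw [degC_eq_card]
  have hsplit : (univ.filter ((pG n P hP).Adj v)) =
      (univ.filter (fun y : Fin n => 0 < y.1 ∧ P y.1 = v.1)) ∪
      (univ.filter (fun y : Fin n => 0 < v.1 ∧ P v.1 = y.1)) := by
    ext y
    simp only [mem_filter, mem_univ, true_and, mem_union]
    exact ⟨fun h => h.symm.imp id id, fun h => h.symm.imp id id⟩
  rw [hsplit, card_union_of_disjoint, childcnt, ← card_filter_fin]
  · congr 1
    by_cases hv : 0 < v.1
    · rw [if_pos hv]
      have : (univ.filter (fun y : Fin n => 0 < v.1 ∧ P v.1 = y.1)) =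
          {(⟨P v.1, (hP v.1 hv v.2).trans v.2⟩ : Fin n)} := by
        ext y
        simp only [mem_filter, mem_univ, true_and, mem_singleton, Fin.ext_iff]
        constructor
        · rintro ⟨-, h⟩; exact h.symm
        · intro h; exact ⟨hv, h.symm⟩
      rw [this, card_singleton]
    · rw [if_neg hv]
      rw [card_eq_zero, filter_eq_empty_iff]
      intro y _
      exact fun h => hv h.1
  · rw [Finset.disjoint_left]
    rintro y hy1 hy2
    simp only [mem_filter, mem_univ, true_and] at hy1 hy2
    have h1 := hP y.1 hy1.1 y.2
    have h2 := hP v.1 hy2.1 v.2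
    omega

lemma pG_reach (hn : 0 < n) (x : Fin n) : (pG n P hP).Reachable x ⟨0, hn⟩ := by
  suffices H : ∀ kv : ℕ, ∀ h : kv < n, (pG n P hP).Reachable ⟨kv, h⟩ ⟨0, hn⟩ by
    have := H x.1 x.2
    simpa using this
  intro kv
  induction kv using Nat.strong_induction_on with
  | _ kv ih =>
    intro hlt
    rcases Nat.eq_zero_or_pos kv with h0 | h0
    · subst h0; rfl
    · have hplt : P kv < kv := hP kv h0 hlt
      have hadj : (pG n P hP).Adj ⟨kv, hlt⟩ ⟨P kv, hplt.trans hlt⟩ := Or.inl ⟨h0, rfl⟩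
      exact (hadj.reachable).trans (ih (P kv) hplt (hplt.trans hlt))

lemma pG_connected (hn : 0 < n) : (pG n P hP).Connected := by
  rw [connected_iff_exists_forall_reachable]
  exact ⟨⟨0, hn⟩, fun w => (pG_reach hP hn w).symm⟩

lemma pG_acyclic : (pG n P hP).IsAcyclic := by
  intro v c hc
  classical
  have hvmem : v ∈ c.support := c.start_mem_support
  set S : Finset (Fin n) := c.support.toFinset with hS
  have hSne : S.Nonempty := ⟨v, by simp [hS]⟩
  set k : Fin n := S.max' hSne with hk
  have hkmem : k ∈ c.support := by
    have := S.max'_mem hSne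
    simpa [hS] using this
  have hmax : ∀ x ∈ c.support, x ≤ k := by
    intro x hx
    exact S.le_max' x (by simp [hS, hx])
  set c' := c.rotate k hkmem with hc'
  have hc'cyc : c'.IsCycle := hc.rotate hkmem
  have hsupp : ∀ x ∈ c'.support, x ≤ k := by
    intro x hx
    rw [SimpleGraph.Walk.support_eq_cons] at hx
    rcases hx with _ | hx
    · exact le_refl k
    · apply hmax
      have hrot := SimpleGraph.Walk.support_rotate c k hkmem
      have hx2 : x ∈ c.support.tail := hrot.mem_iff.1 (by assumption)
      rw [SimpleGraph.Walk.support_eq_cons c]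
      exact List.mem_cons_of_mem _ hx2
  obtain ⟨b, hadj, q, hq⟩ := SimpleGraph.Walk.not_nil_iff.mp hc'cyc.not_nil
  have hlen : 3 ≤ c'.length := hc'cyc.three_le_length
  have hqlen : 0 < q.length := by
    rw [hq] at hlen
    simp only [SimpleGraph.Walk.length_cons] at hlen
    omega
  have hqrevnil : ¬ q.reverse.Nil := by
    rw [SimpleGraph.Walk.not_nil_iff_lt_length, SimpleGraph.Walk.length_reverse]
    exact hqlen
  obtain ⟨b2, hadj2, q2, hq2⟩ := SimpleGraph.Walk.not_nil_iff.mp hqrevnil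
  -- b ≠ b2 via edge nodup
  have hnodup : c'.edges.Nodup := hc'cyc.edges_nodup
  have hb2edge : s(k, b2) ∈ q.edges := by
    have : s(k, b2) ∈ q.reverse.edges := by
      rw [hq2]; simp
    rwa [SimpleGraph.Walk.edges_reverse, List.mem_reverse] at this
  have hbne : b ≠ b2 := by
    intro hbb
    rw [hq] at hnodup
    simp only [SimpleGraph.Walk.edges_cons, List.nodup_cons] at hnodup
    exact hnodup.1 (hbb ▸ hb2edge)
  have hbmem : b ∈ c'.support := by
    rw [hq]
    simp only [SimpleGraph.Walk.support_cons]
    exact List.mem_cons_of_mem _ q.start_mem_support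
  have hb2mem : b2 ∈ c'.support := by
    rw [hq]
    simp only [SimpleGraph.Walk.support_cons]
    apply List.mem_cons_of_mem
    have : b2 ∈ q.reverse.support := by
      rw [hq2]; simp only [SimpleGraph.Walk.support_cons]
      exact List.mem_cons_of_mem _ q2.start_mem_support
    rwa [SimpleGraph.Walk.support_reverse, List.mem_reverse] at this
  have hadj2' : (pG n P hP).Adj k b2 := hadj2
  -- both b, b2 < k, so both are P k
  have key : ∀ x : Fin n, (pG n P hP).Adj k x → x ∈ c'.support → x.1 = P k.1 := by
    intro x hx hxs
    have hxle : x ≤ k := hsupp x hxs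
    have hxne : x ≠ k := hx.ne'
    have hxlt : x.1 < k.1 := by
      rcases lt_or_eq_of_le hxle with h | h
      · exact h
      · exact absurd h hxne
    rcases hx with ⟨hk0, hPk⟩ | ⟨hx0, hPx⟩
    · exact hPk.symm
    · have := hP x.1 hx0 x.2
      omega
  have e1 := key b hadj hbmem
  have e2 := key b2 hadj2' hb2mem
  exact hbne (Fin.ext (e1.trans e2.symm))

end PTree

section UB
variable {n : ℕ} {G : SimpleGraph (Fin n)}

lemma matching_two_mul_card_le (M : Finset (Sym2 (Fin n))) (hM : IsMatchingF G M) :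
    2 * M.card ≤ n := by
  classical
  set T := M.biUnion (fun e => univ.filter (· ∈ e)) with hT
  have hdis : ∀ e ∈ M, ∀ f ∈ M, e ≠ f →
      Disjoint (univ.filter (· ∈ e)) (univ.filter (· ∈ f)) := by
    intro e he f hf hne
    rw [Finset.disjoint_left]
    intro v hv1 hv2
    simp only [mem_filter, mem_univ, true_and] at hv1 hv2
    exact hM.2 e he f hf hne v ⟨hv1, hv2⟩
  have hcard : ∀ e ∈ M, #(univ.filter (· ∈ e)) = 2 := by
    intro e he
    induction e using Sym2.ind with
    | _ a b =>
      have hadj : G.Adj a b := (SimpleGraph.mem_edgeSet G).1 (hM.1 _ he)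
      have : (univ.filter (· ∈ s(a, b))) = {a, b} := by
        ext v
        simp [Sym2.mem_iff]
      rw [this, card_pair hadj.ne]
  have h1 : T.card = ∑ e ∈ M, #(univ.filter (· ∈ e)) := card_biUnion hdis
  have h2 : T.card ≤ n := by
    have := card_le_card (subset_univ T)
    simpa using this
  rw [h1, Finset.sum_congr rfl hcard, Finset.sum_const, smul_eq_mul] at h2
  omega

lemma matching_card_le_half (M : Finset (Sym2 (Fin n))) (hM : IsMatchingF G M) :
    M.card ≤ n / 2 := by
  have := matching_two_mul_card_le M hM
  omega

lemma adj_exists_big_degree (hconn : G.Connected) (hn : 3 ≤ n) {a b : Fin n}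
    (hadj : G.Adj a b) : 2 ≤ degC G a ∨ 2 ≤ degC G b := by
  classical
  by_contra hcon
  push_neg at hcon
  obtain ⟨ha, hb⟩ := hcon
  have huniq : ∀ (x y : Fin n), G.Adj x y → degC G x < 2 →
      ∀ z, G.Adj x z → z = y := by
    intro x y hxy hx z hxz
    by_contra hzy
    have hsub : ({z, y} : Finset (Fin n)) ⊆ univ.filter (G.Adj x) := by
      intro w hw
      simp only [mem_insert, mem_singleton] at hw
      rcases hw with rfl | rfl <;> simp [mem_filter, hxz, hxy]
    have := card_le_card hsub
    rw [card_pair hzy, ← degC_eq_card] at this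
    omega
  have claim : ∀ (x y : Fin n) (p : G.Walk x y), y = a → x = a ∨ x = b := by
    intro x y p
    induction p with
    | nil => intro h; exact Or.inl h
    | cons hxy q ih =>
      intro h
      rcases ih h with rfl | rfl
      · exact Or.inr (huniq _ b hadj ha _ hxy.symm)
      · exact Or.inl (huniq _ a hadj.symm hb _ hxy.symm)
  have hne : (univ \ ({a, b} : Finset (Fin n))).Nonempty := by
    rw [← card_pos, card_sdiff_of_subset (subset_univ _)]
    have h2 : #({a, b} : Finset (Fin n)) ≤ 2 := card_insert_le _ _ |>.trans (by simp)
    have : n ≤ #(univ : Finset (Fin n)) := by simp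
    omega
  obtain ⟨w, hw⟩ := hne
  simp only [mem_sdiff, mem_univ, true_and, mem_insert, mem_singleton, not_or] at hw
  obtain ⟨p⟩ := hconn w a
  rcases claim w a p rfl with rfl | rfl
  · exact hw.1 rfl
  · exact hw.2 rfl

lemma matching_card_le_internal (hconn : G.Connected) (hn : 3 ≤ n)
    (M : Finset (Sym2 (Fin n))) (hM : IsMatchingF G M) (d : ℕ → ℕ)
    (σ : Equiv.Perm (Fin n)) (hσ : ∀ i : Fin n, degC G (σ i) = d i.1) :
    M.card ≤ #((range n).filter (fun i => 2 ≤ d i)) := by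
  classical
  have hch : ∀ e : Sym2 (Fin n), ∃ i : ℕ,
      e ∈ M → i ∈ (range n).filter (fun i => 2 ≤ d i) ∧ σ ⟨i % n, Nat.mod_lt _ (by omega)⟩ ∈ e := by
    intro e
    by_cases he : e ∈ M
    · induction e using Sym2.ind with
      | _ a b =>
        have hadj : G.Adj a b := (SimpleGraph.mem_edgeSet G).1 (hM.1 _ he)
        rcases adj_exists_big_degree hconn hn hadj with h2 | h2
        · refine ⟨(σ.symm a).1, fun _ => ⟨?_, ?_⟩⟩
          · simp only [mem_filter, mem_range]
            refine ⟨(σ.symm a).2, ?_⟩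
            have := hσ (σ.symm a)
            simp only [Equiv.apply_symm_apply] at this
            omega
          · have hmod : (σ.symm a).1 % n = (σ.symm a).1 := Nat.mod_eq_of_lt (σ.symm a).2
            have : (⟨(σ.symm a).1 % n, Nat.mod_lt _ (by omega)⟩ : Fin n) = σ.symm a := by
              apply Fin.ext; simp [hmod]
            rw [this, Equiv.apply_symm_apply]
            simp [Sym2.mem_iff]
        · refine ⟨(σ.symm b).1, fun _ => ⟨?_, ?_⟩⟩
          · simp only [mem_filter, mem_range]
            refine ⟨(σ.symm b).2, ?_⟩
            have := hσ (σ.symm b)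
            simp only [Equiv.apply_symm_apply] at this
            omega
          · have hmod : (σ.symm b).1 % n = (σ.symm b).1 := Nat.mod_eq_of_lt (σ.symm b).2
            have : (⟨(σ.symm b).1 % n, Nat.mod_lt _ (by omega)⟩ : Fin n) = σ.symm b := by
              apply Fin.ext; simp [hmod]
            rw [this, Equiv.apply_symm_apply]
            simp [Sym2.mem_iff]
    · exact ⟨0, fun h => absurd h he⟩
  choose f hf using hch
  apply Finset.card_le_card_of_injOn f
  · intro e he
    exact (hf e he).1
  · intro e he e' he' hee
    by_contra hne
    have h1 := (hf e he).2
    have h2 := (hf e' he').2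
    rw [hee] at h1
    exact hM.2 e he e' he' hne _ ⟨h1, h2⟩

end UB

lemma initSeg (S : Finset ℕ) (hdc : ∀ a b : ℕ, a ≤ b → b ∈ S → a ∈ S) :
    S = range S.card := by
  rcases S.eq_empty_or_nonempty with rfl | hne
  · simp
  · have hmax := S.max'_mem hne
    have hS : S = range (S.max' hne + 1) := by
      ext x
      rw [mem_range]
      constructor
      · intro hx; exact Nat.lt_succ_of_le (S.le_max' x hx)
      · intro hx; exact hdc x _ (Nat.lt_succ_iff.1 hx) hmax
    rw [hS, card_range]

namespace TC

def z (h t l : ℕ) : ℕ := max h (l - t)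
def c0 (h t l : ℕ) : ℕ := if 0 < t then t + z h t l + 1 - l else 0
def onec (h t l : ℕ) : ℕ := l - z h t l - 1
def R (h t l : ℕ) : ℕ := onec h t l + (z h t l - h)
def sl (h : ℕ) (Δ : ℕ → ℕ) (j : ℕ) : ℕ :=
  Δ j - 2 + (if j = 0 then 1 else 0) + (if j = h - 1 then 1 else 0)
def cap (h t : ℕ) (Δ : ℕ → ℕ) (j : ℕ) : ℕ :=
  sl h Δ j - 1 - (if j = 0 ∧ 0 < t then 1 else 0)
def Cap (h t : ℕ) (Δ : ℕ → ℕ) (j : ℕ) : ℕ := ∑ j' ∈ range (j + 1), cap h t Δ j'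
def g (h t : ℕ) (Δ : ℕ → ℕ) (r : ℕ) : ℕ := #((range h).filter (fun j => Cap h t Δ j ≤ r))

structure Hyp (h t l : ℕ) (Δ : ℕ → ℕ) : Prop where
  hh : 1 ≤ h
  hl2 : 2 ≤ l
  hΔ2 : ∀ j < h, 2 ≤ Δ j
  hΔ3 : 2 ≤ h → ∀ j < h, 3 ≤ Δ j
  hsum : ∑ j ∈ range h, Δ j = l - 2 + 2 * h

variable {h t l : ℕ} {Δ : ℕ → ℕ}

lemma h_lt_l (H : Hyp h t l Δ) : h < l := by
  rcases Nat.lt_or_ge h 2 with h2 | h2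
  · have := H.hh; have := H.hl2; omega
  · have hb : ∑ j ∈ range h, (3:ℕ) ≤ ∑ j ∈ range h, Δ j := by
      apply Finset.sum_le_sum
      intro j hj
      exact H.hΔ3 h2 j (mem_range.1 hj)
    rw [Finset.sum_const, card_range, smul_eq_mul] at hb
    have := H.hsum; have := H.hl2
    omega

lemma basics (H : Hyp h t l Δ) :
    h ≤ z h t l ∧ z h t l ≤ l ∧ l ≤ z h t l + t ∧
    (0 < t → z h t l < l) ∧ (t = 0 → z h t l = l) ∧
    c0 h t l ≤ t ∧ (0 < t → 1 ≤ c0 h t l) ∧ (t = 0 → c0 h t l = 0) ∧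
    c0 h t l + onec h t l = t ∧
    R h t l = l - h - (if 0 < t then 1 else 0) ∧
    (0 < t → c0 h t l + l = t + z h t l + 1) ∧
    (0 < t → onec h t l + z h t l + 1 = l) ∧
    (t = 0 → onec h t l = 0) ∧
    R h t l = onec h t l + (z h t l - h) := by
  have hl := h_lt_l H
  have h1 : h ≤ z h t l := le_max_left _ _
  have h2 : l - t ≤ z h t l := le_max_right _ _
  have h3 : z h t l = h ∨ z h t l = l - t := max_choice _ _
  have hc : c0 h t l = if 0 < t then t + z h t l + 1 - l else 0 := rfl
  have ho : onec h t l = l - z h t l - 1 := rfl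
  have hR : R h t l = onec h t l + (z h t l - h) := rfl
  split_ifs at hc ⊢ with ht <;> omega

lemma sum_sl (H : Hyp h t l Δ) : ∑ j ∈ range h, sl h Δ j = l := by
  have hl := h_lt_l H
  have hh := H.hh
  unfold sl
  rw [Finset.sum_add_distrib, Finset.sum_add_distrib]
  have h1 : ∑ j ∈ range h, (if j = 0 then (1:ℕ) else 0) = 1 := by
    rw [Finset.sum_ite_eq' (range h) 0 (fun _ => (1:ℕ)), if_pos (mem_range.2 (by omega))]
  have h2 : ∑ j ∈ range h, (if j = h - 1 then (1:ℕ) else 0) = 1 := by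
    rw [Finset.sum_ite_eq' (range h) (h-1) (fun _ => (1:ℕ)), if_pos (mem_range.2 (by omega))]
  have h3 : ∑ j ∈ range h, (Δ j - 2) = l - 2 := by
    have he : ∑ j ∈ range h, (Δ j - 2) = (∑ j ∈ range h, Δ j) - (∑ j ∈ range h, 2) := by
      rw [Finset.sum_tsub_distrib]
      intro j hj
      exact H.hΔ2 j (mem_range.1 hj)
    rw [he, H.hsum, Finset.sum_const, card_range, smul_eq_mul]
    omega
  rw [h1, h2, h3]
  omega

lemma sl_ge (H : Hyp h t l Δ) (j : ℕ) (hj : j < h) :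
    1 + (if j = 0 ∧ 0 < t then 1 else 0) ≤ sl h Δ j := by
  have h2 := H.hΔ2 j hj
  have hh := H.hh
  have h4 : h = 1 ∨ 3 ≤ Δ j := by
    rcases Nat.lt_or_ge h 2 with hh2 | hh2
    · exact Or.inl (by omega)
    · exact Or.inr (H.hΔ3 hh2 j hj)
  have hsl : sl h Δ j = Δ j - 2 + (if j = 0 then 1 else 0) + (if j = h - 1 then 1 else 0) := rfl
  split_ifs at hsl ⊢ <;> omega

lemma sum_cap (H : Hyp h t l Δ) : ∑ j ∈ range h, cap h t Δ j = R h t l := by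
  obtain ⟨hb1, hb2, hb3, hb4, hb5, hb6, hb7, hb8, hb9, hb10, hb11, hb12, hb13, hb14⟩ := basics H
  have hh := H.hh
  unfold cap
  have hstep : ∀ j ∈ range h, (sl h Δ j - 1 - (if j = 0 ∧ 0 < t then 1 else 0)) =
      sl h Δ j - (1 + (if j = 0 ∧ 0 < t then 1 else 0)) := by
    intro j hj
    omega
  rw [Finset.sum_congr rfl hstep,
    Finset.sum_tsub_distrib _ (fun j hj => sl_ge H j (mem_range.1 hj)),
    sum_sl H, Finset.sum_add_distrib, Finset.sum_const, card_range, smul_eq_mul, mul_one]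
  have h4 : ∑ j ∈ range h, (if j = 0 ∧ 0 < t then (1:ℕ) else 0) = if 0 < t then 1 else 0 := by
    rcases Nat.eq_zero_or_pos t with rfl | ht
    · simp
    · rw [if_pos ht]
      have hcong : ∀ j ∈ range h, (if j = 0 ∧ 0 < t then (1:ℕ) else 0) =
          if j = 0 then 1 else 0 := by
        intro j _
        exact if_congr (and_iff_left ht) rfl rfl
      rw [Finset.sum_congr rfl hcong, Finset.sum_ite_eq' (range h) 0 (fun _ => (1:ℕ)),
        if_pos (mem_range.2 (by omega))]
  rw [h4, hb10]
  split_ifs <;> omega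

lemma Cap_mono {j j' : ℕ} (hjj : j ≤ j') : Cap h t Δ j ≤ Cap h t Δ j' := by
  unfold Cap
  apply Finset.sum_le_sum_of_subset
  exact range_subset_range.2 (by omega)

lemma Cap_last (H : Hyp h t l Δ) : Cap h t Δ (h - 1) = R h t l := by
  have hh := H.hh
  unfold Cap
  have he : h - 1 + 1 = h := by omega
  rw [he]
  exact sum_cap H

lemma g_spec (H : Hyp h t l Δ) {r : ℕ} (hr : r < R h t l) :
    g h t Δ r < h ∧ r < Cap h t Δ (g h t Δ r) ∧ ∀ j' < g h t Δ r, Cap h t Δ j' ≤ r := by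
  have hh := H.hh
  have hgdef : g h t Δ r = #((range h).filter (fun j => Cap h t Δ j ≤ r)) := rfl
  have hdc : ∀ a b : ℕ, a ≤ b → b ∈ (range h).filter (fun j => Cap h t Δ j ≤ r) →
      a ∈ (range h).filter (fun j => Cap h t Δ j ≤ r) := by
    intro a b hab hb
    simp only [mem_filter, mem_range] at *
    exact ⟨by omega, le_trans (Cap_mono hab) hb.2⟩
  have hseg := initSeg _ hdc
  have hcard : g h t Δ r < h := by
    have hsub : #((range h).filter (fun j => Cap h t Δ j ≤ r)) ≤ h := by
      calc _ ≤ #(range h) := card_filter_le _ _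
      _ = h := card_range h
    rcases Nat.lt_or_ge (g h t Δ r) h with hlt | hge
    · exact hlt
    · exfalso
      have hmem : h - 1 ∈ (range h).filter (fun j => Cap h t Δ j ≤ r) := by
        rw [hseg, ← hgdef, mem_range]
        omega
      simp only [mem_filter] at hmem
      rw [Cap_last H] at hmem
      omega
  refine ⟨hcard, ?_, ?_⟩
  · have hnm : g h t Δ r ∉ (range h).filter (fun j => Cap h t Δ j ≤ r) := by
      rw [hseg, ← hgdef]
      simp
    simp only [mem_filter, mem_range, not_and] at hnm
    have := hnm hcard
    omega
  · intro j' hj'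
    have hmem : j' ∈ (range h).filter (fun j => Cap h t Δ j ≤ r) := by
      rw [hseg, ← hgdef, mem_range]
      omega
    simp only [mem_filter] at hmem
    exact hmem.2

lemma Cap_succ (jj : ℕ) : Cap h t Δ (jj + 1) = Cap h t Δ jj + cap h t Δ (jj + 1) := by
  unfold Cap
  rw [Finset.sum_range_succ]

lemma Cap_zero : Cap h t Δ 0 = cap h t Δ 0 := by
  unfold Cap
  rw [Finset.sum_range_one]

lemma g_eq_iff (H : Hyp h t l Δ) {r j : ℕ} (hr : r < R h t l) (hj : j < h) :
    g h t Δ r = j ↔ Cap h t Δ j - cap h t Δ j ≤ r ∧ r < Cap h t Δ j := by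
  obtain ⟨hg1, hg2, hg3⟩ := g_spec H hr
  constructor
  · rintro rfl
    refine ⟨?_, hg2⟩
    rcases Nat.eq_zero_or_pos (g h t Δ r) with h0 | h0
    · rw [h0]
      have := Cap_zero (h := h) (t := t) (Δ := Δ)
      omega
    · have hle := hg3 (g h t Δ r - 1) (by omega)
      have hsucc := Cap_succ (h := h) (t := t) (Δ := Δ) (g h t Δ r - 1)
      rw [show g h t Δ r - 1 + 1 = g h t Δ r from by omega] at hsucc
      omega
  · rintro ⟨hlo, hhi⟩
    rcases Nat.lt_trichotomy (g h t Δ r) j with hlt | heq | hgt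
    · exfalso
      rcases Nat.eq_zero_or_pos j with rfl | hj0
      · omega
      · have hmm : Cap h t Δ (g h t Δ r) ≤ Cap h t Δ (j - 1) := Cap_mono (by omega)
        have hsucc := Cap_succ (h := h) (t := t) (Δ := Δ) (j - 1)
        rw [show j - 1 + 1 = j from by omega] at hsucc
        omega
    · exact heq
    · exfalso
      have := hg3 j hgt
      omega

lemma g_count (H : Hyp h t l Δ) {j : ℕ} (hj : j < h) :
    ∑ r ∈ range (R h t l), (if g h t Δ r = j then (1:ℕ) else 0) = cap h t Δ j := by
  have hCapR : Cap h t Δ j ≤ R h t l := by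
    rw [← Cap_last H]
    exact Cap_mono (by have := H.hh; omega)
  have hcaple : cap h t Δ j ≤ Cap h t Δ j := by
    rcases Nat.eq_zero_or_pos j with rfl | hj0
    · have := Cap_zero (h := h) (t := t) (Δ := Δ)
      omega
    · have hsucc := Cap_succ (h := h) (t := t) (Δ := Δ) (j - 1)
      rw [show j - 1 + 1 = j from by omega] at hsucc
      omega
  have hstep : ∀ r ∈ range (R h t l), (if g h t Δ r = j then (1:ℕ) else 0) =
      (if r ∈ Ico (Cap h t Δ j - cap h t Δ j) (Cap h t Δ j) then 1 else 0) := by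
    intro r hr
    rw [mem_range] at hr
    exact if_congr ((g_eq_iff H hr hj).trans (by rw [mem_Ico])) rfl rfl
  rw [Finset.sum_congr rfl hstep, Finset.sum_ite_mem, Finset.sum_const, smul_eq_mul, mul_one]
  have hinter : (range (R h t l)) ∩ Ico (Cap h t Δ j - cap h t Δ j) (Cap h t Δ j) =
      Ico (Cap h t Δ j - cap h t Δ j) (Cap h t Δ j) := by
    apply Finset.inter_eq_right.2
    intro r hr
    rw [mem_Ico] at hr
    rw [mem_range]
    omega
  rw [hinter, Nat.card_Ico]
  omega


def par (h t l : ℕ) (Δ : ℕ → ℕ) (k : ℕ) : ℕ :=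
  if k < h then k - 1
  else if k < h + c0 h t l then (if k = h then 0 else k - 1)
  else if k < h + t then g h t Δ (k - (h + c0 h t l))
  else if k = h + t ∧ 0 < t then h + c0 h t l - 1
  else if k < h + t + (l - z h t l) then h + c0 h t l + (k - (h + t)) - 1
  else if k < h + t + (l - z h t l) + h then k - (h + t + (l - z h t l))
  else g h t Δ (onec h t l + (k - (h + t + (l - z h t l) + h)))

variable {h t l : ℕ} {Δ : ℕ → ℕ}

lemma par_spine {k : ℕ} (hk : 0 < k) (hk2 : k < h) : par h t l Δ k = k - 1 := by
  unfold par; rw [if_pos hk2]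

lemma par_big (H : Hyp h t l Δ) {k : ℕ} (hk : h ≤ k) (hk2 : k < h + c0 h t l) :
    par h t l Δ k = if k = h then 0 else k - 1 := by
  unfold par; rw [if_neg (by omega), if_pos hk2]

lemma par_onetwo (H : Hyp h t l Δ) {k : ℕ} (hk : h + c0 h t l ≤ k) (hk2 : k < h + t) :
    par h t l Δ k = g h t Δ (k - (h + c0 h t l)) := by
  unfold par; rw [if_neg (by omega), if_neg (by omega), if_pos hk2]

lemma par_bigleaf (H : Hyp h t l Δ) (ht : 0 < t) :
    par h t l Δ (h + t) = h + c0 h t l - 1 := by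
  obtain ⟨hb1, hb2, hb3, hb4, hb5, hb6, hb7, hb8, hb9, hb10, hb11, hb12, hb13, hb14⟩ := basics H
  unfold par
  rw [if_neg (by omega), if_neg (by omega), if_neg (by omega), if_pos ⟨rfl, ht⟩]

lemma par_oneleaf (H : Hyp h t l Δ) {k : ℕ} (hk : h + t < k) (hk2 : k < h + t + (l - z h t l)) :
    par h t l Δ k = h + c0 h t l + (k - (h + t)) - 1 := by
  obtain ⟨hb1, hb2, hb3, hb4, hb5, hb6, hb7, hb8, hb9, hb10, hb11, hb12, hb13, hb14⟩ := basics H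
  unfold par
  rw [if_neg (by omega), if_neg (by omega), if_neg (by omega), if_neg (by omega), if_pos hk2]

lemma par_ownleaf (H : Hyp h t l Δ) {k : ℕ} (hk : h + t + (l - z h t l) ≤ k)
    (hk2 : k < h + t + (l - z h t l) + h) :
    par h t l Δ k = k - (h + t + (l - z h t l)) := by
  obtain ⟨hb1, hb2, hb3, hb4, hb5, hb6, hb7, hb8, hb9, hb10, hb11, hb12, hb13, hb14⟩ := basics H
  unfold par
  rw [if_neg (by omega), if_neg (by omega), if_neg (by omega), if_neg (by omega),
    if_neg (by omega), if_pos hk2]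

lemma par_extraleaf (H : Hyp h t l Δ) {k : ℕ} (hk : h + t + (l - z h t l) + h ≤ k) :
    par h t l Δ k = g h t Δ (onec h t l + (k - (h + t + (l - z h t l) + h))) := by
  obtain ⟨hb1, hb2, hb3, hb4, hb5, hb6, hb7, hb8, hb9, hb10, hb11, hb12, hb13, hb14⟩ := basics H
  unfold par
  rw [if_neg (by omega), if_neg (by omega), if_neg (by omega), if_neg (by omega),
    if_neg (by omega), if_neg (by omega)]

lemma par_lt_m (H : Hyp h t l Δ) {k : ℕ} (hk : 0 < k) (hkn : k < h + t + l) :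
    par h t l Δ k < h + t := by
  obtain ⟨hb1, hb2, hb3, hb4, hb5, hb6, hb7, hb8, hb9, hb10, hb11, hb12, hb13, hb14⟩ := basics H
  have hh := H.hh
  rcases Nat.lt_or_ge k h with c1 | c1
  · rw [par_spine hk c1]; omega
  rcases Nat.lt_or_ge k (h + c0 h t l) with c2 | c2
  · rw [par_big H c1 c2]; split_ifs <;> omega
  rcases Nat.lt_or_ge k (h + t) with c3 | c3
  · rw [par_onetwo H c2 c3]
    have := (g_spec H (r := k - (h + c0 h t l)) (by omega)).1
    omega
  rcases Nat.lt_or_ge k (h + t + (l - z h t l)) with c4 | c4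
  · rcases Nat.eq_or_lt_of_le c3 with rfl | c3'
    · have ht : 0 < t := by omega
      rw [par_bigleaf H ht]; omega
    · rw [par_oneleaf H c3' c4]; omega
  rcases Nat.lt_or_ge k (h + t + (l - z h t l) + h) with c5 | c5
  · rw [par_ownleaf H c4 c5]; omega
  · rw [par_extraleaf H c5]
    have := (g_spec H (r := onec h t l + (k - (h + t + (l - z h t l) + h))) (by omega)).1
    omega

lemma par_lt_self (H : Hyp h t l Δ) : ∀ k, 0 < k → k < h + t + l → par h t l Δ k < k := by
  intro k hk hkn
  obtain ⟨hb1, hb2, hb3, hb4, hb5, hb6, hb7, hb8, hb9, hb10, hb11, hb12, hb13, hb14⟩ := basics H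
  have hh := H.hh
  rcases Nat.lt_or_ge k h with c1 | c1
  · rw [par_spine hk c1]; omega
  rcases Nat.lt_or_ge k (h + c0 h t l) with c2 | c2
  · rw [par_big H c1 c2]; split_ifs <;> omega
  rcases Nat.lt_or_ge k (h + t) with c3 | c3
  · rw [par_onetwo H c2 c3]
    have := (g_spec H (r := k - (h + c0 h t l)) (by omega)).1
    omega
  · have := par_lt_m H hk hkn
    omega


lemma childcnt_leaf (H : Hyp h t l Δ) {v : ℕ} (hv : h + t ≤ v) :
    childcnt (h + t + l) (par h t l Δ) v = 0 := by
  unfold childcnt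
  rw [card_eq_zero, filter_eq_empty_iff]
  intro k hk
  rw [mem_range] at hk
  rintro ⟨hk0, hpk⟩
  have := par_lt_m H hk0 hk
  omega

def ct (h t l : ℕ) (v : ℕ) : ℕ :=
  if v + 1 < h + c0 h t l then v + 1
  else if v + 1 = h + c0 h t l then h + t
  else h + t + (v - (h + c0 h t l)) + 1

lemma childcnt_two (H : Hyp h t l Δ) {v : ℕ} (hv1 : h ≤ v) (hv2 : v < h + t) :
    childcnt (h + t + l) (par h t l Δ) v = 1 := by
  obtain ⟨hb1, hb2, hb3, hb4, hb5, hb6, hb7, hb8, hb9, hb10, hb11, hb12, hb13, hb14⟩ := basics H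
  have hh := H.hh
  have ht : 0 < t := by omega
  unfold childcnt
  have hset : (range (h + t + l)).filter (fun k => 0 < k ∧ par h t l Δ k = v) = {ct h t l v} := by
    ext k
    simp only [mem_filter, mem_range, mem_singleton]
    have hct : ct h t l v = if v + 1 < h + c0 h t l then v + 1
      else if v + 1 = h + c0 h t l then h + t
      else h + t + (v - (h + c0 h t l)) + 1 := rfl
    constructor
    · rintro ⟨hkn, hk0, hpk⟩
      rcases Nat.lt_or_ge k h with c1 | c1
      · rw [par_spine hk0 c1] at hpk; omega
      rcases Nat.lt_or_ge k (h + c0 h t l) with c2 | c2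
      · rw [par_big H c1 c2] at hpk
        split_ifs at hpk <;> split_ifs at hct <;> omega
      rcases Nat.lt_or_ge k (h + t) with c3 | c3
      · rw [par_onetwo H c2 c3] at hpk
        have := (g_spec H (r := k - (h + c0 h t l)) (by omega)).1
        omega
      rcases Nat.lt_or_ge k (h + t + (l - z h t l)) with c4 | c4
      · rcases Nat.eq_or_lt_of_le c3 with rfl | c3'
        · rw [par_bigleaf H ht] at hpk
          split_ifs at hct <;> omega
        · rw [par_oneleaf H c3' c4] at hpk
          split_ifs at hct <;> omega
      rcases Nat.lt_or_ge k (h + t + (l - z h t l) + h) with c5 | c5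
      · rw [par_ownleaf H c4 c5] at hpk; omega
      · rw [par_extraleaf H c5] at hpk
        have := (g_spec H (r := onec h t l + (k - (h + t + (l - z h t l) + h))) (by omega)).1
        omega
    · rintro rfl
      split_ifs at hct with d1 d2
      · rw [hct]
        refine ⟨by omega, by omega, ?_⟩
        rw [par_big H (by omega) (by omega), if_neg (by omega)]
        omega
      · rw [hct]
        refine ⟨by omega, by omega, ?_⟩
        rw [par_bigleaf H ht]
        omega
      · rw [hct]
        refine ⟨by omega, by omega, ?_⟩
        rw [par_oneleaf H (by omega) (by omega)]
        omega
  rw [hset, card_singleton]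

lemma childcnt_high (H : Hyp h t l Δ) {j : ℕ} (hj : j < h) :
    childcnt (h + t + l) (par h t l Δ) j =
      (if j + 1 < h then 1 else 0) + (if j = 0 ∧ 0 < t then 1 else 0) + 1 + cap h t Δ j := by
  obtain ⟨hb1, hb2, hb3, hb4, hb5, hb6, hb7, hb8, hb9, hb10, hb11, hb12, hb13, hb14⟩ := basics H
  have hh := H.hh
  unfold childcnt
  rw [card_filter]
  set f : ℕ → ℕ := fun k => if 0 < k ∧ par h t l Δ k = j then 1 else 0 with hf
  have key : ∀ a b : ℕ, a ≤ b → ∑ k ∈ Ico a b, f k = ∑ k ∈ Ico a b, f k := fun _ _ _ => rfl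
  rw [range_eq_Ico]
  have split1 : ∑ k ∈ Ico 0 (h + t + l), f k =
      ∑ k ∈ Ico 0 h, f k + ∑ k ∈ Ico h (h + c0 h t l), f k +
      ∑ k ∈ Ico (h + c0 h t l) (h + t), f k +
      ∑ k ∈ Ico (h + t) (h + t + (l - z h t l)), f k +
      ∑ k ∈ Ico (h + t + (l - z h t l)) (h + t + (l - z h t l) + h), f k +
      ∑ k ∈ Ico (h + t + (l - z h t l) + h) (h + t + l), f k := by
    rw [Finset.sum_Ico_consecutive f (by omega : (0:ℕ) ≤ h) (by omega : h ≤ h + c0 h t l)]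
    rw [Finset.sum_Ico_consecutive f (by omega : (0:ℕ) ≤ h + c0 h t l) (by omega : h + c0 h t l ≤ h + t)]
    rw [Finset.sum_Ico_consecutive f (by omega : (0:ℕ) ≤ h + t) (by omega : h + t ≤ h + t + (l - z h t l))]
    rw [Finset.sum_Ico_consecutive f (by omega : (0:ℕ) ≤ h + t + (l - z h t l))
      (by omega : h + t + (l - z h t l) ≤ h + t + (l - z h t l) + h)]
    rw [Finset.sum_Ico_consecutive f (by omega : (0:ℕ) ≤ h + t + (l - z h t l) + h)
      (by omega : h + t + (l - z h t l) + h ≤ h + t + l)]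
  rw [split1]
  -- piece 1 : spine
  have p1 : ∑ k ∈ Ico 0 h, f k = if j + 1 < h then 1 else 0 := by
    have hcong : ∀ k ∈ Ico 0 h, f k = if k = j + 1 then 1 else 0 := by
      intro k hk
      rw [mem_Ico] at hk
      simp only [hf]
      rcases Nat.eq_zero_or_pos k with rfl | hk0
      · rw [if_neg (by omega), if_neg (by omega)]
      · rw [par_spine hk0 hk.2]
        exact if_congr (by omega) rfl rfl
    rw [Finset.sum_congr rfl hcong, Finset.sum_ite_eq' (Ico 0 h) (j+1) (fun _ => (1:ℕ))]
    exact if_congr (by rw [mem_Ico]; omega) rfl rfl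
  -- piece 2 : big head
  have p2 : ∑ k ∈ Ico h (h + c0 h t l), f k = if j = 0 ∧ 0 < t then 1 else 0 := by
    have hcong : ∀ k ∈ Ico h (h + c0 h t l), f k =
        if k = h then (if j = 0 then 1 else 0) else 0 := by
      intro k hk
      rw [mem_Ico] at hk
      simp only [hf]
      rw [par_big H hk.1 hk.2]
      by_cases hkh : k = h
      · rw [if_pos hkh, if_pos hkh]
        exact if_congr (by omega) rfl rfl
      · rw [if_neg hkh, if_neg hkh, if_neg (by omega)]
    rw [Finset.sum_congr rfl hcong, Finset.sum_ite_eq' (Ico h (h + c0 h t l)) h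
      (fun _ => if j = 0 then (1:ℕ) else 0)]
    rcases Nat.eq_zero_or_pos t with ht0 | ht0
    · rw [if_neg (by rw [mem_Ico]; omega), if_neg (by omega)]
    · rw [if_pos (mem_Ico.mpr ⟨le_refl h, by omega⟩)]
      exact if_congr (by omega) rfl rfl
  -- piece 3 : one-two g
  have p3 : ∑ k ∈ Ico (h + c0 h t l) (h + t), f k =
      ∑ r ∈ Ico 0 (onec h t l), (if g h t Δ r = j then (1:ℕ) else 0) := by
    have hcong : ∀ k ∈ Ico (h + c0 h t l) (h + t), f k =
        if g h t Δ (k - (h + c0 h t l)) = j then 1 else 0 := by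
      intro k hk
      rw [mem_Ico] at hk
      simp only [hf]
      rw [par_onetwo H hk.1 hk.2]
      exact if_congr (by omega) rfl rfl
    rw [Finset.sum_congr rfl hcong, Finset.sum_Ico_eq_sum_range]
    rw [show h + t - (h + c0 h t l) = onec h t l from by omega, range_eq_Ico]
    apply Finset.sum_congr rfl
    intro r _
    rw [show h + c0 h t l + r - (h + c0 h t l) = r from by omega]
  -- piece 4 : one-leaves and big leaf, all zero
  have p4 : ∑ k ∈ Ico (h + t) (h + t + (l - z h t l)), f k = 0 := by
    apply Finset.sum_eq_zero
    intro k hk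
    rw [mem_Ico] at hk
    have ht : 0 < t := by omega
    simp only [hf]
    rcases Nat.eq_or_lt_of_le hk.1 with rfl | hk1
    · rw [par_bigleaf H ht, if_neg (by omega)]
    · rw [par_oneleaf H hk1 hk.2, if_neg (by omega)]
  -- piece 5 : own leaf
  have p5 : ∑ k ∈ Ico (h + t + (l - z h t l)) (h + t + (l - z h t l) + h), f k = 1 := by
    have hcong : ∀ k ∈ Ico (h + t + (l - z h t l)) (h + t + (l - z h t l) + h), f k =
        if k = h + t + (l - z h t l) + j then 1 else 0 := by
      intro k hk
      rw [mem_Ico] at hk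
      simp only [hf]
      rw [par_ownleaf H hk.1 hk.2]
      exact if_congr (by omega) rfl rfl
    rw [Finset.sum_congr rfl hcong, Finset.sum_ite_eq' _ _ (fun _ => (1:ℕ)),
      if_pos (mem_Ico.mpr ⟨by omega, by omega⟩)]
  -- piece 6 : extra leaves
  have p6 : ∑ k ∈ Ico (h + t + (l - z h t l) + h) (h + t + l), f k =
      ∑ r ∈ Ico (onec h t l) (R h t l), (if g h t Δ r = j then (1:ℕ) else 0) := by
    have hcong : ∀ k ∈ Ico (h + t + (l - z h t l) + h) (h + t + l), f k =
        if g h t Δ (onec h t l + (k - (h + t + (l - z h t l) + h))) = j then 1 else 0 := by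
      intro k hk
      rw [mem_Ico] at hk
      simp only [hf]
      rw [par_extraleaf H hk.1]
      exact if_congr (by omega) rfl rfl
    rw [Finset.sum_congr rfl hcong, Finset.sum_Ico_eq_sum_range, Finset.sum_Ico_eq_sum_range]
    rw [show h + t + l - (h + t + (l - z h t l) + h) = R h t l - onec h t l from by omega]
    apply Finset.sum_congr rfl
    intro r _
    rw [show h + t + (l - z h t l) + h + r - (h + t + (l - z h t l) + h) = r from by omega]
  rw [p1, p2, p3, p4, p5, p6]
  have p36 : ∑ r ∈ Ico 0 (onec h t l), (if g h t Δ r = j then (1:ℕ) else 0) +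
      ∑ r ∈ Ico (onec h t l) (R h t l), (if g h t Δ r = j then (1:ℕ) else 0) = cap h t Δ j := by
    rw [Finset.sum_Ico_consecutive _ (by omega : (0:ℕ) ≤ onec h t l) (by omega : onec h t l ≤ R h t l)]
    rw [← range_eq_Ico]
    exact g_count H hj
  omega


def K (h t l : ℕ) : ℕ := h + onec h t l + (c0 h t l + 1) / 2

def wB (h t l : ℕ) (q : ℕ) : ℕ := if q = c0 h t l then h + t else h + q

def prs (h t l : ℕ) (u : ℕ) : ℕ × ℕ :=
  if u < h then (h + t + (l - z h t l) + u, u)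
  else if u < h + onec h t l then (h + t + (u - h + 1), h + c0 h t l + (u - h))
  else (wB h t l (c0 h t l - 2 * (u - h - onec h t l)),
        wB h t l (c0 h t l - 2 * (u - h - onec h t l) - 1))

lemma K_eq (H : Hyp h t l Δ) : K h t l = min (h + t) ((h + t + l) / 2) := by
  obtain ⟨hb1, hb2, hb3, hb4, hb5, hb6, hb7, hb8, hb9, hb10, hb11, hb12, hb13, hb14⟩ := basics H
  have hh := H.hh
  have hl := h_lt_l H
  have hzc : z h t l = h ∨ z h t l = l - t := max_choice _ _
  have hK : K h t l = h + onec h t l + (c0 h t l + 1) / 2 := rfl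
  omega

lemma prs_edge (H : Hyp h t l Δ) {u : ℕ} (hu : u < K h t l) :
    0 < (prs h t l u).1 ∧ (prs h t l u).1 < h + t + l ∧ (prs h t l u).2 < h + t + l ∧
    par h t l Δ ((prs h t l u).1) = (prs h t l u).2 := by
  obtain ⟨hb1, hb2, hb3, hb4, hb5, hb6, hb7, hb8, hb9, hb10, hb11, hb12, hb13, hb14⟩ := basics H
  have hh := H.hh
  have hl := h_lt_l H
  have hK : K h t l = h + onec h t l + (c0 h t l + 1) / 2 := rfl
  unfold prs
  split_ifs with d1 d2
  · simp only
    refine ⟨by omega, by omega, by omega, ?_⟩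
    rw [par_ownleaf H (by omega) (by omega)]
    omega
  · simp only
    have hone : 0 < onec h t l := by omega
    have ht : 0 < t := by
      rcases Nat.eq_zero_or_pos t with ht0 | ht0
      · exfalso; have := hb13 ht0; omega
      · exact ht0
    refine ⟨by omega, by omega, by omega, ?_⟩
    rw [par_oneleaf H (by omega) (by omega)]
    omega
  · simp only
    set s := u - h - onec h t l with hs
    have hslt : s < (c0 h t l + 1) / 2 := by omega
    have hc0pos : 0 < c0 h t l := by omega
    have ht : 0 < t := by
      rcases Nat.eq_zero_or_pos t with ht0 | ht0
      · exfalso; have := hb8 ht0; omega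
      · exact ht0
    have hwB : ∀ q : ℕ, wB h t l q = if q = c0 h t l then h + t else h + q := fun q => rfl
    rcases Nat.eq_zero_or_pos s with hs0 | hs0
    · rw [hs0]
      simp only [Nat.mul_zero, Nat.sub_zero]
      rw [hwB, if_pos rfl, hwB, if_neg (by omega)]
      refine ⟨by omega, by omega, by omega, ?_⟩
      rw [par_bigleaf H ht]
      omega
    · have hq1 : 1 ≤ c0 h t l - 2 * s := by omega
      have hq2 : c0 h t l - 2 * s ≤ c0 h t l - 2 := by omega
      rw [hwB, if_neg (by omega), hwB, if_neg (by omega)]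
      refine ⟨by omega, by omega, by omega, ?_⟩
      rw [par_big H (by omega) (by omega), if_neg (by omega)]
      omega

lemma prs_disj (H : Hyp h t l Δ) {u u' : ℕ} (hu : u < K h t l) (hu' : u' < K h t l)
    (hne : u ≠ u') :
    (prs h t l u).1 ≠ (prs h t l u').1 ∧ (prs h t l u).1 ≠ (prs h t l u').2 ∧
    (prs h t l u).2 ≠ (prs h t l u').1 ∧ (prs h t l u).2 ≠ (prs h t l u').2 := by
  obtain ⟨hb1, hb2, hb3, hb4, hb5, hb6, hb7, hb8, hb9, hb10, hb11, hb12, hb13, hb14⟩ := basics H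
  have hh := H.hh
  have hl := h_lt_l H
  have hK : K h t l = h + onec h t l + (c0 h t l + 1) / 2 := rfl
  have htpos : 0 < onec h t l + (c0 h t l + 1) / 2 → 0 < t := by
    intro hp
    rcases Nat.eq_zero_or_pos t with ht0 | ht0
    · exfalso
      have := hb13 ht0; have := hb8 ht0
      omega
    · exact ht0
  have hwB : ∀ q : ℕ, wB h t l q = if q = c0 h t l then h + t else h + q := fun q => rfl
  unfold prs
  split_ifs with d1 d2 d1' d2' d2' d1' d2' d2' <;> simp only
  · refine ⟨by omega, by omega, by omega, by omega⟩
  · have ht : 0 < t := htpos (by omega)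
    refine ⟨by omega, by omega, by omega, by omega⟩
  · have ht : 0 < t := htpos (by omega)
    set s' := u' - h - onec h t l with hs'
    have hslt' : s' < (c0 h t l + 1) / 2 := by omega
    rw [hwB, hwB]
    split_ifs <;> refine ⟨by omega, by omega, by omega, by omega⟩
  · have ht : 0 < t := htpos (by omega)
    refine ⟨by omega, by omega, by omega, by omega⟩
  · have ht : 0 < t := htpos (by omega)
    refine ⟨by omega, by omega, by omega, by omega⟩
  · have ht : 0 < t := htpos (by omega)
    set s' := u' - h - onec h t l with hs'
    have hslt' : s' < (c0 h t l + 1) / 2 := by omega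
    rw [hwB, hwB]
    split_ifs <;> refine ⟨by omega, by omega, by omega, by omega⟩
  · have ht : 0 < t := htpos (by omega)
    set s := u - h - onec h t l with hs
    have hslt : s < (c0 h t l + 1) / 2 := by omega
    rw [hwB, hwB]
    split_ifs <;> refine ⟨by omega, by omega, by omega, by omega⟩
  · have ht : 0 < t := htpos (by omega)
    set s := u - h - onec h t l with hs
    have hslt : s < (c0 h t l + 1) / 2 := by omega
    rw [hwB, hwB]
    split_ifs <;> refine ⟨by omega, by omega, by omega, by omega⟩
  · have ht : 0 < t := htpos (by omega)
    set s := u - h - onec h t l with hs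
    set s' := u' - h - onec h t l with hs'
    have hslt : s < (c0 h t l + 1) / 2 := by omega
    have hslt' : s' < (c0 h t l + 1) / 2 := by omega
    have hsne : s ≠ s' := by omega
    rw [hwB, hwB, hwB, hwB]
    split_ifs <;> refine ⟨by omega, by omega, by omega, by omega⟩


lemma construction (H : Hyp h t l Δ) :
    ∃ G : SimpleGraph (Fin (h + t + l)), G.IsTree ∧
      (∀ v : Fin (h + t + l), v.1 < h → degC G v = Δ v.1) ∧
      (∀ v : Fin (h + t + l), h ≤ v.1 → v.1 < h + t → degC G v = 2) ∧
      (∀ v : Fin (h + t + l), h + t ≤ v.1 → degC G v = 1) ∧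
      ∃ M : Finset (Sym2 (Fin (h + t + l))), IsMatchingF G M ∧
        M.card = min (h + t) ((h + t + l) / 2) := by
  classical
  obtain ⟨hb1, hb2, hb3, hb4, hb5, hb6, hb7, hb8, hb9, hb10, hb11, hb12, hb13, hb14⟩ := basics H
  have hh := H.hh
  have hl := h_lt_l H
  have hn0 : 0 < h + t + l := by omega
  have hpar : ∀ k, 0 < k → k < h + t + l → par h t l Δ k < k := par_lt_self H
  refine ⟨pG (h + t + l) (par h t l Δ) hpar, ⟨pG_connected hpar hn0, pG_acyclic hpar⟩,
    ?_, ?_, ?_, ?_⟩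
  · -- high degrees
    intro v hv
    rw [pG_degree hpar v, childcnt_high H hv]
    have h2 := H.hΔ2 v.1 hv
    have h4 : h = 1 ∨ 3 ≤ Δ v.1 := by
      rcases Nat.lt_or_ge h 2 with hh2 | hh2
      · exact Or.inl (by omega)
      · exact Or.inr (H.hΔ3 hh2 v.1 hv)
    have hcap : cap h t Δ v.1 = sl h Δ v.1 - 1 - (if v.1 = 0 ∧ 0 < t then 1 else 0) := rfl
    have hsl : sl h Δ v.1 =
        Δ v.1 - 2 + (if v.1 = 0 then 1 else 0) + (if v.1 = h - 1 then 1 else 0) := rfl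
    split_ifs at hcap hsl ⊢ <;> omega
  · -- degree-2 vertices
    intro v hv1 hv2
    rw [pG_degree hpar v, childcnt_two H hv1 hv2, if_pos (by omega)]
  · -- leaves
    intro v hv
    rw [pG_degree hpar v, childcnt_leaf H hv, if_pos (by omega)]
  · -- matching
    set N := h + t + l with hN
    set fn : ℕ → Fin N := fun a => ⟨a % N, Nat.mod_lt _ hn0⟩ with hfn_def
    have hfn : ∀ a, a < N → (fn a).1 = a := fun a ha => Nat.mod_eq_of_lt ha
    refine ⟨(range (K h t l)).image
      (fun u => s(fn (prs h t l u).1, fn (prs h t l u).2)), ⟨?_, ?_⟩, ?_⟩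
    · intro e he
      rw [mem_image] at he
      obtain ⟨u, hu, rfl⟩ := he
      rw [mem_range] at hu
      obtain ⟨he1, he2, he3, he4⟩ := prs_edge H hu
      rw [SimpleGraph.mem_edgeSet]
      exact Or.inl ⟨by rw [hfn _ he2]; exact he1, by rw [hfn _ he2, hfn _ he3]; exact he4⟩
    · intro e he f hf hef v hv
      rw [mem_image] at he hf
      obtain ⟨u, hu, rfl⟩ := he
      obtain ⟨u', hu', rfl⟩ := hf
      rw [mem_range] at hu hu'
      obtain ⟨hv1, hv2⟩ := hv
      rcases eq_or_ne u u' with rfl | hne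
      · exact hef rfl
      obtain ⟨hd1, hd2, hd3, hd4⟩ := prs_disj H hu hu' hne
      obtain ⟨he1, he2, he3, he4⟩ := prs_edge H hu
      obtain ⟨he1', he2', he3', he4'⟩ := prs_edge H hu'
      rw [Sym2.mem_iff] at hv1 hv2
      rcases hv1 with rfl | rfl
      · rcases hv2 with hx | hx
        · have hvv := congrArg Fin.val hx
          rw [hfn _ he2, hfn _ he2'] at hvv
          exact hd1 hvv
        · have hvv := congrArg Fin.val hx
          rw [hfn _ he2, hfn _ he3'] at hvv
          exact hd2 hvv
      · rcases hv2 with hx | hx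
        · have hvv := congrArg Fin.val hx
          rw [hfn _ he3, hfn _ he2'] at hvv
          exact hd3 hvv
        · have hvv := congrArg Fin.val hx
          rw [hfn _ he3, hfn _ he3'] at hvv
          exact hd4 hvv
    · rw [card_image_of_injOn, card_range, K_eq H]
      intro u hu u' hu' heq
      rw [mem_coe, mem_range] at hu hu'
      by_contra hne
      obtain ⟨hd1, hd2, hd3, hd4⟩ := prs_disj H hu hu' hne
      obtain ⟨he1, he2, he3, he4⟩ := prs_edge H hu
      obtain ⟨he1', he2', he3', he4'⟩ := prs_edge H hu'
      rw [Sym2.eq_iff] at heq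
      rcases heq with ⟨ha, hb⟩ | ⟨ha, hb⟩
      · have hvv := congrArg Fin.val ha
        rw [hfn _ he2, hfn _ he2'] at hvv
        exact hd1 hvv
      · have hvv := congrArg Fin.val ha
        rw [hfn _ he2, hfn _ he3'] at hvv
        exact hd2 hvv

end TC

lemma empty_matching {V : Type*} (G : SimpleGraph V) : IsMatchingF G (∅ : Finset (Sym2 V)) :=
  ⟨fun e he => absurd he (Finset.notMem_empty e),
   fun e he => absurd he (Finset.notMem_empty e)⟩

theorem max_matchNum_over_trees (n : ℕ) (d : ℕ → ℕ) (hn : 2 < n)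
    (hsort : ∀ i j, i ≤ j → j < n → d i ≤ d j)
    (hpos : ∀ i < n, 1 ≤ d i)
    (hsum : ∑ i ∈ Finset.range n, d i = 2 * n - 2)
    (l : ℕ) (hl : l = ((Finset.range n).filter fun i => d i = 1).card) :
    sSup {k | ∃ G : SimpleGraph (Fin n), G.IsTree ∧ HasDegSeq d G ∧ matchNum G = k} =
      min (n - l) (n / 2) := by
  classical
  obtain ⟨t, ht_def⟩ : ∃ t, t = #((range n).filter fun i => d i = 2) := ⟨_, rfl⟩
  -- the ones form an initial segment
  have hseg1 : (range n).filter (fun i => d i = 1) = range l := by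
    have hdc : ∀ a b : ℕ, a ≤ b → b ∈ (range n).filter (fun i => d i = 1) →
        a ∈ (range n).filter (fun i => d i = 1) := by
      intro a b hab hb
      simp only [mem_filter, mem_range] at *
      have h1 := hsort a b hab (by omega)
      have h2 := hpos a (by omega)
      exact ⟨by omega, by omega⟩
    have hseg := initSeg _ hdc
    rw [← hl] at hseg
    exact hseg
  have hone : ∀ i < n, (d i = 1 ↔ i < l) := by
    intro i hi
    constructor
    · intro hdi
      have hmm : i ∈ (range n).filter (fun i => d i = 1) := by
        simp only [mem_filter, mem_range]; exact ⟨hi, hdi⟩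
      rw [hseg1, mem_range] at hmm
      exact hmm
    · intro hil
      have hmm : i ∈ (range n).filter (fun i => d i = 1) := by
        rw [hseg1, mem_range]; exact hil
      simp only [mem_filter] at hmm
      exact hmm.2
  have hseg2 : (range n).filter (fun i => d i ≤ 2) = range (l + t) := by
    have hdc : ∀ a b : ℕ, a ≤ b → b ∈ (range n).filter (fun i => d i ≤ 2) →
        a ∈ (range n).filter (fun i => d i ≤ 2) := by
      intro a b hab hb
      simp only [mem_filter, mem_range] at *
      have h1 := hsort a b hab (by omega)
      exact ⟨by omega, by omega⟩
    have hseg := initSeg _ hdc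
    have hcard : #((range n).filter (fun i => d i ≤ 2)) = l + t := by
      have hun : (range n).filter (fun i => d i ≤ 2) =
          (range n).filter (fun i => d i = 1) ∪ (range n).filter (fun i => d i = 2) := by
        ext i
        simp only [mem_filter, mem_union, mem_range]
        constructor
        · rintro ⟨hi, hd2⟩
          have := hpos i hi
          rcases Nat.eq_or_lt_of_le this with h1 | h1
          · exact Or.inl ⟨hi, h1.symm⟩
          · exact Or.inr ⟨hi, by omega⟩
        · rintro (⟨hi, he⟩ | ⟨hi, he⟩) <;> exact ⟨hi, by omega⟩
      rw [hun, card_union_of_disjoint, ← hl, ← ht_def]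
      rw [Finset.disjoint_left]
      intro i h1 h2
      simp only [mem_filter] at h1 h2
      omega
    rw [hcard] at hseg
    exact hseg
  have htwo : ∀ i < n, (d i ≤ 2 ↔ i < l + t) := by
    intro i hi
    constructor
    · intro hdi
      have hmm : i ∈ (range n).filter (fun i => d i ≤ 2) := by
        simp only [mem_filter, mem_range]; exact ⟨hi, hdi⟩
      rw [hseg2, mem_range] at hmm
      exact hmm
    · intro hil
      have hmm : i ∈ (range n).filter (fun i => d i ≤ 2) := by
        rw [hseg2, mem_range]; exact hil
      simp only [mem_filter] at hmm
      exact hmm.2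
  have hltn : l + t ≤ n := by
    have h1 := card_le_card (filter_subset (fun i => d i ≤ 2) (range n))
    rw [hseg2, card_range, card_range] at h1
    exact h1
  have hl2 : 2 ≤ l := by
    have key : ∀ i ∈ range n, 2 ≤ d i + (if d i = 1 then 1 else 0) := by
      intro i hi
      have := hpos i (mem_range.1 hi)
      split_ifs <;> omega
    have hs := Finset.sum_le_sum key
    rw [Finset.sum_const, card_range, smul_eq_mul, Finset.sum_add_distrib, hsum] at hs
    have hsite : ∑ i ∈ range n, (if d i = 1 then (1:ℕ) else 0) = l := by
      rw [hl, card_filter]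
    rw [hsite] at hs
    omega
  have hln : l < n := by
    rcases Nat.lt_or_ge l n with hc | hc
    · exact hc
    · exfalso
      have hall : ∀ i ∈ range n, d i = 1 := by
        intro i hi
        rw [mem_range] at hi
        exact (hone i hi).2 (by omega)
      have := Finset.sum_congr rfl hall
      rw [hsum, Finset.sum_const, card_range, smul_eq_mul, mul_one] at this
      omega
  obtain ⟨h, hh_def⟩ : ∃ h, h = n - l - t := ⟨_, rfl⟩
  have hnh : n = l + t + h := by omega
  -- sum of high degrees
  have hd2 : ∀ i, l ≤ i → i < l + t → d i = 2 := by
    intro i h1 h2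
    have ha := (htwo i (by omega)).2 h2
    have hb := hone i (by omega)
    have hc := hpos i (by omega)
    omega
  have hd3 : ∀ i, l + t ≤ i → i < n → 3 ≤ d i := by
    intro i h1 h2
    have ha := htwo i h2
    omega
  have hsum_high : ∑ j ∈ range h, d (l + t + j) = l - 2 + 2 * h := by
    have hsplit : (∑ i ∈ Ico 0 l, d i) + (∑ i ∈ Ico l (l + t), d i) = ∑ i ∈ Ico 0 (l + t), d i :=
      Finset.sum_Ico_consecutive d (by omega) (by omega)
    have hsplit2 : (∑ i ∈ Ico 0 (l + t), d i) + (∑ i ∈ Ico (l + t) n, d i) = ∑ i ∈ Ico 0 n, d i :=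
      Finset.sum_Ico_consecutive d (by omega) (by omega)
    have e1 : ∑ i ∈ Ico 0 l, d i = l := by
      have : ∀ i ∈ Ico 0 l, d i = 1 := by
        intro i hi
        rw [mem_Ico] at hi
        exact (hone i (by omega)).2 hi.2
      rw [Finset.sum_congr rfl this, Finset.sum_const, Nat.card_Ico, smul_eq_mul, mul_one]
      omega
    have e2 : ∑ i ∈ Ico l (l + t), d i = 2 * t := by
      have : ∀ i ∈ Ico l (l + t), d i = 2 := by
        intro i hi
        rw [mem_Ico] at hi
        exact hd2 i hi.1 hi.2
      rw [Finset.sum_congr rfl this, Finset.sum_const, Nat.card_Ico, smul_eq_mul]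
      omega
    have e4 : ∑ i ∈ Ico 0 n, d i = 2 * n - 2 := by
      rw [← range_eq_Ico, hsum]
    have e5 : ∑ i ∈ Ico (l + t) n, d i = ∑ j ∈ range h, d (l + t + j) := by
      rw [Finset.sum_Ico_eq_sum_range]
      apply Finset.sum_congr
      · congr 1
        omega
      · intro j _
        rfl
    omega
  -- obtain the abstract parameters
  obtain ⟨h', t', Δ', H, heqn, ht'le, hΔd⟩ :
      ∃ h' t' Δ', TC.Hyp h' t' l Δ' ∧ h' + t' + l = n ∧ t' ≤ t ∧
        (∀ j < h', Δ' j = d (l + t' + j)) := by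
    rcases Nat.eq_zero_or_pos h with hh0 | hh0
    · have hlz : l = 2 := by
        rw [hh0] at hsum_high
        simp only [range_zero, Finset.sum_empty] at hsum_high
        omega
      have ht1 : 1 ≤ t := by omega
      refine ⟨1, t - 1, fun _ => 2, ⟨le_refl 1, hl2, fun j hj => le_refl 2,
        fun h2 => absurd h2 (by omega), ?_⟩, by omega, by omega, ?_⟩
      · rw [Finset.sum_range_one]
        omega
      · intro j hj
        have hj0 : j = 0 := by omega
        subst hj0
        exact (hd2 (l + (t - 1)) (by omega) (by omega)).symm
    · refine ⟨h, t, fun j => d (l + t + j), ⟨hh0, hl2, ?_, ?_, hsum_high⟩, by omega, le_refl t,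
        fun j hj => rfl⟩
      · intro j hj
        have := hd3 (l + t + j) (by omega) (by omega)
        omega
      · intro _ j hj
        exact hd3 (l + t + j) (by omega) (by omega)
  clear hh_def hnh hsum_high hd3 hseg1 hseg2
  subst heqn
  -- now n is h' + t' + l
  obtain ⟨G0, htree, hdegH, hdeg2, hdeg1, M, hM, hMc⟩ := TC.construction H
  have hn0 : 0 < h' + t' + l := by omega
  -- the permutation
  obtain ⟨σnat, hσnat⟩ : ∃ σnat : ℕ → ℕ, σnat = fun i =>
      if i < l then h' + t' + i else if i < l + t' then h' + (i - l) else i - (l + t') := ⟨_, rfl⟩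
  have hσb : ∀ i : ℕ, i < h' + t' + l → σnat i < h' + t' + l := by
    intro i hi
    simp only [hσnat]
    split_ifs <;> omega
  obtain ⟨fσ, hfσ⟩ : ∃ fσ : Fin (h' + t' + l) → Fin (h' + t' + l),
      fσ = fun i => ⟨σnat i.1 % (h' + t' + l), Nat.mod_lt _ hn0⟩ := ⟨_, rfl⟩
  have hfσv : ∀ i : Fin (h' + t' + l), (fσ i).1 = σnat i.1 := by
    intro i
    rw [hfσ]
    exact Nat.mod_eq_of_lt (hσb i.1 i.2)
  have hinj : Function.Injective fσ := by
    intro a b hab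
    have h1 := congrArg Fin.val hab
    rw [hfσv, hfσv] at h1
    simp only [hσnat] at h1
    have ha := a.2
    have hb := b.2
    apply Fin.ext
    split_ifs at h1 <;> omega
  have hbij : Function.Bijective fσ := Finite.injective_iff_bijective.1 hinj
  set σ : Equiv.Perm (Fin (h' + t' + l)) := Equiv.ofBijective fσ hbij with hσdef
  have hσ : ∀ i : Fin (h' + t' + l), degC G0 (σ i) = d i.1 := by
    intro i
    have hσi : σ i = fσ i := rfl
    rw [hσi]
    rcases Nat.lt_or_ge i.1 l with c1 | c1
    · rw [hdeg1 (fσ i) (by rw [hfσv]; simp only [hσnat]; rw [if_pos c1]; omega)]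
      exact ((hone i.1 (by omega)).2 c1).symm
    rcases Nat.lt_or_ge i.1 (l + t') with c2 | c2
    · rw [hdeg2 (fσ i) ?_ ?_]
      · exact (hd2 i.1 c1 (by omega)).symm
      · rw [hfσv]; simp only [hσnat]; rw [if_neg (by omega), if_pos c2]; omega
      · rw [hfσv]; simp only [hσnat]; rw [if_neg (by omega), if_pos c2]; omega
    · have hv : (fσ i).1 = i.1 - (l + t') := by
        rw [hfσv]; simp only [hσnat]; rw [if_neg (by omega), if_neg (by omega)]
      have hvh : (fσ i).1 < h' := by
        rw [hv]
        have := i.2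
        omega
      rw [hdegH (fσ i) hvh, hΔd _ (by rw [hv] at hvh ⊢; exact hvh)]
      rw [hv]
      congr 1
      have := i.2
      omega
  -- count of internal vertices
  have hinternal : #((range (h' + t' + l)).filter fun i => 2 ≤ d i) = h' + t' := by
    have hun : (range (h' + t' + l)).filter (fun i => 2 ≤ d i) =
        range (h' + t' + l) \ (range (h' + t' + l)).filter (fun i => d i = 1) := by
      ext i
      simp only [mem_filter, mem_sdiff, mem_range]
      constructor
      · rintro ⟨hi, h2⟩
        exact ⟨hi, fun hc => by omega⟩
      · rintro ⟨hi, h2⟩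
        have h3 := hpos i hi
        refine ⟨hi, ?_⟩
        by_contra h4
        exact h2 ⟨hi, by omega⟩
    rw [hun, card_sdiff_of_subset (filter_subset _ _), card_range, ← hl]
    omega
  -- upper bound for matchings of any tree with this degree sequence
  have hub : ∀ G : SimpleGraph (Fin (h' + t' + l)), G.IsTree → HasDegSeq d G →
      ∀ k ∈ {k | ∃ M' : Finset (Sym2 (Fin (h' + t' + l))), IsMatchingF G M' ∧ M'.card = k},
        k ≤ min (h' + t') ((h' + t' + l) / 2) := by
    rintro G hG ⟨σ', hσ'⟩ k ⟨M', hM', rfl⟩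
    refine le_min ?_ ?_
    · have hle := matching_card_le_internal hG.isConnected (by omega) M' hM' d σ'
        (fun i => hσ' i)
      rw [hinternal] at hle
      exact hle
    · exact matching_card_le_half M' hM'
  have hmnonempty : ∀ G : SimpleGraph (Fin (h' + t' + l)),
      {k | ∃ M' : Finset (Sym2 (Fin (h' + t' + l))), IsMatchingF G M' ∧ M'.card = k}.Nonempty :=
    fun G => ⟨0, ∅, empty_matching G, card_empty⟩
  -- matchNum of the constructed tree
  have hmn : matchNum G0 = min (h' + t') ((h' + t' + l) / 2) := by
    have hbdd : BddAbove {k | ∃ M' : Finset (Sym2 (Fin (h' + t' + l))),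
        IsMatchingF G0 M' ∧ M'.card = k} :=
      ⟨min (h' + t') ((h' + t' + l) / 2), fun k hk => hub G0 htree ⟨σ, hσ⟩ k hk⟩
    unfold matchNum
    apply le_antisymm
    · exact csSup_le (hmnonempty G0) (hub G0 htree ⟨σ, hσ⟩)
    · exact le_csSup hbdd ⟨M, hM, hMc⟩
  -- final computation
  have hKS : min (h' + t') ((h' + t' + l) / 2) ∈
      {k | ∃ G : SimpleGraph (Fin (h' + t' + l)), G.IsTree ∧ HasDegSeq d G ∧ matchNum G = k} :=
    ⟨G0, htree, ⟨σ, hσ⟩, hmn⟩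
  have hSub : ∀ k ∈ {k | ∃ G : SimpleGraph (Fin (h' + t' + l)),
      G.IsTree ∧ HasDegSeq d G ∧ matchNum G = k}, k ≤ min (h' + t') ((h' + t' + l) / 2) := by
    rintro k ⟨G, hG, hds, rfl⟩
    exact csSup_le (hmnonempty G) (hub G hG hds)
  rw [show h' + t' + l - l = h' + t' from by omega]
  have hbdd2 : BddAbove {k | ∃ G : SimpleGraph (Fin (h' + t' + l)),
      G.IsTree ∧ HasDegSeq d G ∧ matchNum G = k} :=
    ⟨min (h' + t') ((h' + t' + l) / 2), fun k hk => hSub k hk⟩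
  exact le_antisymm (csSup_le ⟨_, hKS⟩ hSub) (le_csSup hbdd2 hKS)
end
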